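/- arXiv:2503.04189 — 5 statements merged into one kernel-verified Lean document; each statement's English description precedes it below -/
import Mathlib

section
/- (Submultiplicativity of Gevrey quasi-norms, inequality (3.25)) Fix s > 1, h ∈ (0,1], T > 0 and n ≥ 2. For m, k ∈ ℝ and a smooth a : ℝ^n × ℝ^{n−1} → ℂ define the Gevrey quasi-norm N̄_{m,k}(a,T) = sup_{(x,ξ')} Σ_{α,β} |∂_x^α ∂_{ξ'}^β a(x,ξ')| T^{|α|+|β|} h^{m} ⟨ξ'⟩^{|β|−k} / ((α!)^s (β!)^s), where ⟨ξ'⟩ = (1+|ξ'|²)^{1/2} and the sum runs over all multi-indices α ∈ ℕ^n, β ∈ ℕ^{n−1}. Then for all m, k, m', k' ∈ ℝ and all smooth a, a' : ℝ^n × ℝ^{n−1} → ℂ one has N̄_{m+m', k+k'}(a·a', T) ≤ N̄_{m,k}(a,T) · N̄_{m',k'}(a',T). -/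
open scoped BigOperators Real ENNReal NNReal
open MeasureTheory

noncomputable section

variable {n m : ℕ} {E : Type*} [NormedAddCommGroup E] [NormedSpace ℝ E]

/-- Partial derivative in the `i`-th coordinate of the first factor. -/
def pdx (i : Fin n) (f : (Fin n → ℝ) × (Fin m → ℝ) → E) :
    (Fin n → ℝ) × (Fin m → ℝ) → E :=
  fun p => fderiv ℝ f p (Pi.single i 1, 0)

/-- Partial derivative in the `j`-th coordinate of the second factor. -/
def pdy (j : Fin m) (f : (Fin n → ℝ) × (Fin m → ℝ) → E) :
    (Fin n → ℝ) × (Fin m → ℝ) → E :=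
  fun p => fderiv ℝ f p (0, Pi.single j 1)

/-- Iterated partial derivative ∂_x^α in the first factor. -/
def mdx (α : Fin n → ℕ) (f : (Fin n → ℝ) × (Fin m → ℝ) → E) :
    (Fin n → ℝ) × (Fin m → ℝ) → E :=
  (List.finRange n).foldr (fun i g => (pdx i)^[α i] g) f

/-- Iterated partial derivative ∂_y^β in the second factor. -/
def mdy (β : Fin m → ℕ) (f : (Fin n → ℝ) × (Fin m → ℝ) → E) :
    (Fin n → ℝ) × (Fin m → ℝ) → E :=
  (List.finRange m).foldr (fun j g => (pdy j)^[β j] g) f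

/-- Partial derivative on a single Euclidean factor. -/
def pd {d : ℕ} (i : Fin d) (f : (Fin d → ℝ) → E) : (Fin d → ℝ) → E :=
  fun x => fderiv ℝ f x (Pi.single i 1)

/-- Iterated partial derivative ∂^α on a single Euclidean factor. -/
def md {d : ℕ} (α : Fin d → ℕ) (f : (Fin d → ℝ) → E) : (Fin d → ℝ) → E :=
  (List.finRange d).foldr (fun i g => (pd i)^[α i] g) f

/-- Multi-index factorial `α!`. -/
def mfact {d : ℕ} (α : Fin d → ℕ) : ℕ := ∏ i, (α i).factorial

/-- Multi-index length `|α|`. -/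
def msize {d : ℕ} (α : Fin d → ℕ) : ℕ := ∑ i, α i

/-- The Gevrey quasi-norm
`N̄_{m,k}(a,T) = sup_{(x,ξ')} Σ_{α,β} |∂_x^α ∂_{ξ'}^β a| T^{|α|+|β|} h^m ⟨ξ'⟩^{|β|-k} / (α!^s β!^s)`,
with values in `[0,∞]`. -/
def qnorm (n : ℕ) (s h T m k : ℝ)
    (a : (Fin n → ℝ) × (Fin (n-1) → ℝ) → ℂ) : ℝ≥0∞ :=
  ⨆ p : (Fin n → ℝ) × (Fin (n-1) → ℝ),
    ∑' (α : Fin n → ℕ) (β : Fin (n-1) → ℕ),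
      ENNReal.ofReal (‖mdx α (mdy β a) p‖ * T ^ (msize α + msize β) * h ^ m *
        (Real.sqrt (1 + ∑ i, (p.2 i) ^ 2)) ^ ((msize β : ℝ) - k) /
        ((mfact α * mfact β : ℕ) : ℝ) ^ s)

/-!
By the Leibniz rule, `∂_x^α ∂_ξ'^β (a a') = ∑_{γ ≤ α, δ ≤ β} (α choose γ) (β choose δ)
∂_x^γ ∂_ξ'^δ a · ∂_x^{α-γ} ∂_ξ'^{β-δ} a'`. The factors `T^{|α|+|β|} h^m ⟨ξ'⟩^{|β|-k}` are
exactly multiplicative, and since `α! = (α choose γ) γ! (α-γ)!` and `s ≥ 1`, the binomial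
coefficients are absorbed by the Gevrey factorials:
`(α choose γ) / (α!)^s ≤ 1 / ((γ!)^s ((α-γ)!)^s)`. So at every point the series defining the
quasi-norm of `a a'` is dominated termwise by the Cauchy product of the series for `a` and `a'`,
whose sum is the product of the two sums.

The Leibniz rule is proved algebraically for iterated derivations and then applied to the
directional derivatives, which are derivations of the algebra of smooth functions.
-/

open Finset
open scoped ContDiff

def mchoose {d : ℕ} (α γ : Fin d → ℕ) : ℕ := ∏ i, (α i).choose (γ i)

theorem mchoose_cons {d : ℕ} (α : Fin (d + 1) → ℕ) (j : ℕ) (γ : Fin d → ℕ) :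
    mchoose α (Fin.cons j γ) = (α 0).choose j * mchoose (Fin.tail α) γ := by
  simp [mchoose, Fin.prod_univ_succ, Fin.tail]

theorem mchoose_pos {d : ℕ} {α γ : Fin d → ℕ} (h : γ ≤ α) : 0 < mchoose α γ :=
  prod_pos fun i _ => Nat.choose_pos (h i)

theorem mfact_pos {d : ℕ} (α : Fin d → ℕ) : 0 < mfact α :=
  prod_pos fun _ _ => Nat.factorial_pos _

theorem mchoose_mul_mfact_mul_mfact {d : ℕ} {α γ : Fin d → ℕ} (h : γ ≤ α) :
    mchoose α γ * (mfact γ * mfact (α - γ)) = mfact α := by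
  simp only [mchoose, mfact, ← prod_mul_distrib, Pi.sub_apply]
  exact prod_congr rfl fun i _ => by rw [← mul_assoc, Nat.choose_mul_factorial_mul_factorial (h i)]

theorem msize_add_msize_sub {d : ℕ} {α γ : Fin d → ℕ} (h : γ ≤ α) :
    msize γ + msize (α - γ) = msize α := by
  simp only [msize, ← sum_add_distrib, Pi.sub_apply]
  exact sum_congr rfl fun i _ => Nat.add_sub_cancel' (h i)

theorem sum_Iic_fin_succ {d : ℕ} {M : Type*} [AddCommMonoid M] (α : Fin (d + 1) → ℕ)
    (f : (Fin (d + 1) → ℕ) → M) :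
    ∑ γ ∈ Iic α, f γ = ∑ j ∈ range (α 0 + 1), ∑ γ ∈ Iic (Fin.tail α), f (Fin.cons j γ) := by
  rw [← sum_product']
  refine sum_nbij' (fun γ => (γ 0, Fin.tail γ)) (fun q => Fin.cons q.1 q.2) ?_ ?_ ?_ ?_ ?_
  · intro γ hγ
    simp only [mem_Iic, mem_product, mem_range] at hγ ⊢
    exact ⟨Nat.lt_succ_of_le (hγ 0), fun i => hγ i.succ⟩
  · intro q hq
    simp only [mem_Iic, mem_product, mem_range] at hq ⊢
    exact Fin.cons_le.mpr ⟨Nat.lt_succ_iff.mp hq.1, hq.2⟩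
  · intro γ _; exact Fin.cons_self_tail γ
  · intro q _; simp
  · intro γ _; rw [Fin.cons_self_tail]

theorem div_mul_rpow_le_one_div_rpow {C D s : ℝ} (hC : 1 ≤ C) (hD : 0 < D) (hs : 1 ≤ s) :
    C / (C * D) ^ s ≤ 1 / D ^ s := by
  have hC0 : 0 < C := zero_lt_one.trans_le hC
  rw [Real.mul_rpow hC0.le hD.le, div_le_div_iff₀ (by positivity) (by positivity), one_mul]
  exact mul_le_mul_of_nonneg_right (Real.self_le_rpow_of_one_le hC hs) (by positivity)

/-- The weight of the `(α, β)` term of `qnorm`; `W` stands for `⟨ξ'⟩`. -/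
def gevreyWeight {dx dy : ℕ} (s h T m k W : ℝ) (α : Fin dx → ℕ) (β : Fin dy → ℕ) : ℝ :=
  T ^ (msize α + msize β) * h ^ m * W ^ ((msize β : ℝ) - k) /
    ((mfact α * mfact β : ℕ) : ℝ) ^ s

theorem gevreyWeight_nonneg {dx dy : ℕ} {s h T W : ℝ} (hh : 0 ≤ h) (hT : 0 ≤ T) (hW : 0 ≤ W)
    (m k : ℝ) (α : Fin dx → ℕ) (β : Fin dy → ℕ) : 0 ≤ gevreyWeight s h T m k W α β := by
  unfold gevreyWeight
  positivity

theorem mchoose_div_mfact_rpow_le {dx dy : ℕ} {s : ℝ} (hs : 1 ≤ s) {α γ : Fin dx → ℕ}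
    {β δ : Fin dy → ℕ} (hγ : γ ≤ α) (hδ : δ ≤ β) :
    ((mchoose α γ * mchoose β δ : ℕ) : ℝ) / ((mfact α * mfact β : ℕ) : ℝ) ^ s ≤
      1 / (((mfact γ * mfact δ : ℕ) : ℝ) ^ s * ((mfact (α - γ) * mfact (β - δ) : ℕ) : ℝ) ^ s) := by
  have hfact : mfact α * mfact β = (mchoose α γ * mchoose β δ) *
      ((mfact γ * mfact δ) * (mfact (α - γ) * mfact (β - δ))) := by
    rw [← mchoose_mul_mfact_mul_mfact hγ, ← mchoose_mul_mfact_mul_mfact hδ]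
    ring
  have hC : (1 : ℝ) ≤ (mchoose α γ * mchoose β δ : ℕ) := by
    exact_mod_cast Nat.mul_pos (mchoose_pos hγ) (mchoose_pos hδ)
  have hD : (0 : ℝ) < ((mfact γ * mfact δ) * (mfact (α - γ) * mfact (β - δ)) : ℕ) := by
    exact_mod_cast Nat.mul_pos (Nat.mul_pos (mfact_pos _) (mfact_pos _))
      (Nat.mul_pos (mfact_pos _) (mfact_pos _))
  rw [hfact, Nat.cast_mul _ (_ * _), ← Real.mul_rpow (Nat.cast_nonneg _) (Nat.cast_nonneg _),
    ← Nat.cast_mul (mfact γ * mfact δ)]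
  exact div_mul_rpow_le_one_div_rpow hC hD hs

theorem mchoose_mul_gevreyWeight_le {dx dy : ℕ} {s h T W : ℝ} (hs : 1 ≤ s) (hh : 0 < h)
    (hT : 0 ≤ T) (hW : 0 < W) (m k m' k' : ℝ) {α γ : Fin dx → ℕ} {β δ : Fin dy → ℕ}
    (hγ : γ ≤ α) (hδ : δ ≤ β) :
    ((mchoose α γ * mchoose β δ : ℕ) : ℝ) * gevreyWeight s h T (m + m') (k + k') W α β ≤
      gevreyWeight s h T m k W γ δ * gevreyWeight s h T m' k' W (α - γ) (β - δ) := by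
  have hTpow : T ^ (msize α + msize β) =
      T ^ (msize γ + msize δ) * T ^ (msize (α - γ) + msize (β - δ)) := by
    rw [← pow_add, ← msize_add_msize_sub hγ, ← msize_add_msize_sub hδ]
    ring_nf
  have hWpow : W ^ ((msize β : ℝ) - (k + k')) =
      W ^ ((msize δ : ℝ) - k) * W ^ ((msize (β - δ) : ℝ) - k') := by
    have hsize : (msize δ : ℝ) + msize (β - δ) = msize β := by
      exact_mod_cast msize_add_msize_sub hδ
    rw [← Real.rpow_add hW]
    congr 1
    linarith
  calc ((mchoose α γ * mchoose β δ : ℕ) : ℝ) * gevreyWeight s h T (m + m') (k + k') W α β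
      = (T ^ (msize α + msize β) * h ^ (m + m') * W ^ ((msize β : ℝ) - (k + k'))) *
          (((mchoose α γ * mchoose β δ : ℕ) : ℝ) / ((mfact α * mfact β : ℕ) : ℝ) ^ s) := by
        unfold gevreyWeight; ring
    _ ≤ (T ^ (msize α + msize β) * h ^ (m + m') * W ^ ((msize β : ℝ) - (k + k'))) *
          (1 / (((mfact γ * mfact δ : ℕ) : ℝ) ^ s *
            ((mfact (α - γ) * mfact (β - δ) : ℕ) : ℝ) ^ s)) :=
        mul_le_mul_of_nonneg_left (mchoose_div_mfact_rpow_le hs hγ hδ) (by positivity)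
    _ = _ := by
        rw [hTpow, hWpow, Real.rpow_add hh]
        unfold gevreyWeight
        ring

namespace Derivation

variable {R A : Type*} [CommSemiring R] [CommSemiring A] [Algebra R A]

theorem pow_apply_mul (D : Derivation R A A) (N : ℕ) (a b : A) :
    ((D : Module.End R A) ^ N) (a * b) =
      ∑ j ∈ range (N + 1), N.choose j • (((D : Module.End R A) ^ j) a *
        ((D : Module.End R A) ^ (N - j)) b) := by
  induction N with
  | zero => simp
  | succ N ih =>
    rw [pow_succ', Module.End.mul_apply, ih, map_sum, sum_choose_succ_nsmul
      (fun i j => ((D : Module.End R A) ^ i) a * ((D : Module.End R A) ^ j) b),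
      ← sum_add_distrib]
    refine sum_congr rfl fun j hj => ?_
    have hj : j ≤ N := Nat.lt_succ_iff.mp (mem_range.mp hj)
    rw [map_nsmul, ← smul_add, coeFn_coe, leibniz, smul_eq_mul, smul_eq_mul,
      Nat.sub_add_comm hj, pow_succ', pow_succ']
    simp only [Module.End.mul_apply, coeFn_coe]
    ring

def mpow {d : ℕ} (D : Fin d → Derivation R A A) (α : Fin d → ℕ) : Module.End R A :=
  (List.finRange d).foldr (fun i L => (D i : Module.End R A) ^ α i * L) 1

theorem mpow_succ {d : ℕ} (D : Fin (d + 1) → Derivation R A A) (α : Fin (d + 1) → ℕ) :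
    mpow D α = (D 0 : Module.End R A) ^ α 0 * mpow (Fin.tail D) (Fin.tail α) := by
  simp only [mpow, List.finRange_succ, List.foldr_cons, List.foldr_map]
  rfl

theorem mpow_apply_mul {d : ℕ} (D : Fin d → Derivation R A A) (α : Fin d → ℕ) (a b : A) :
    mpow D α (a * b) = ∑ γ ∈ Iic α, mchoose α γ • (mpow D γ a * mpow D (α - γ) b) := by
  induction d with
  | zero =>
    have : Iic α = {α} := by ext γ; simp [Subsingleton.elim γ α]
    simp [this, mpow, mchoose]
  | succ d ih =>
    rw [mpow_succ, Module.End.mul_apply, ih, map_sum, sum_Iic_fin_succ, sum_comm]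
    refine sum_congr rfl fun γ _ => ?_
    rw [map_nsmul, pow_apply_mul, smul_sum]
    refine sum_congr rfl fun j _ => ?_
    rw [mchoose_cons, show α - Fin.cons j γ = Fin.cons (α 0 - j) (Fin.tail α - γ) from
      Matrix.sub_cons α j γ, mpow_succ, mpow_succ, mul_comm ((α 0).choose j), mul_smul]
    simp only [Fin.cons_zero, Fin.tail_cons, Module.End.mul_apply]

end Derivation

section SmoothFunctions

variable (F 𝔸 : Type*) [NormedAddCommGroup F] [NormedSpace ℝ F] [NormedCommRing 𝔸]
  [NormedAlgebra ℝ 𝔸]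

def smoothFunctions : Subalgebra ℝ (F → 𝔸) where
  carrier := {f | ContDiff ℝ ∞ f}
  mul_mem' {f g} (hf : ContDiff ℝ ∞ f) (hg : ContDiff ℝ ∞ g) := hf.mul hg
  add_mem' {f g} (hf : ContDiff ℝ ∞ f) (hg : ContDiff ℝ ∞ g) := hf.add hg
  algebraMap_mem' c := show ContDiff ℝ ∞ fun _ => algebraMap ℝ 𝔸 c from contDiff_const

variable {F 𝔸}

theorem mem_smoothFunctions {f : F → 𝔸} : f ∈ smoothFunctions F 𝔸 ↔ ContDiff ℝ ∞ f := Iff.rfl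

theorem smoothFunctions.contDiff (f : smoothFunctions F 𝔸) : ContDiff ℝ ∞ (f : F → 𝔸) := f.2

theorem smoothFunctions.differentiableAt (f : smoothFunctions F 𝔸) (p : F) :
    DifferentiableAt ℝ (f : F → 𝔸) p :=
  ((smoothFunctions.contDiff f).differentiable (by simp)).differentiableAt

def lineDerivation (v : F) : Derivation ℝ (smoothFunctions F 𝔸) (smoothFunctions F 𝔸) :=
  Derivation.mk'
    { toFun f := ⟨fun p => fderiv ℝ (f : F → 𝔸) p v,
        mem_smoothFunctions.mpr <|
          ((smoothFunctions.contDiff f).fderiv_right (by exact_mod_cast le_top)).clm_apply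
            contDiff_const⟩
      map_add' f g := by
        ext p
        simp [fderiv_add (smoothFunctions.differentiableAt f p)
          (smoothFunctions.differentiableAt g p)]
      map_smul' c f := by
        ext p
        simp [fderiv_const_smul (smoothFunctions.differentiableAt f p)] }
    fun f g => by
      ext p
      simp [fderiv_mul (smoothFunctions.differentiableAt f p)
        (smoothFunctions.differentiableAt g p)]

theorem coe_pow_lineDerivation_apply (v : F) (N : ℕ) (f : smoothFunctions F 𝔸) :
    ((((lineDerivation (𝔸 := 𝔸) v : Module.End ℝ (smoothFunctions F 𝔸)) ^ N) f :
      smoothFunctions F 𝔸) : F → 𝔸) = (fun g p => fderiv ℝ g p v)^[N] f := by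
  induction N with
  | zero => rfl
  | succ N ih => rw [pow_succ', Module.End.mul_apply, Function.iterate_succ_apply', ← ih]; rfl

theorem coe_foldr_lineDerivation_apply {ι : Type*} (l : List ι) (w : ι → F) (α : ι → ℕ)
    (f : smoothFunctions F 𝔸) :
    ((l.foldr (fun i L => (lineDerivation (𝔸 := 𝔸) (w i) : Module.End ℝ _) ^ α i * L) 1 f :
      smoothFunctions F 𝔸) : F → 𝔸) =
      l.foldr (fun i g => (fun g p => fderiv ℝ g p (w i))^[α i] g) (f : F → 𝔸) := by
  induction l with
  | nil => rfl
  | cons i l ih => rw [List.foldr_cons, List.foldr_cons, Module.End.mul_apply,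
      coe_pow_lineDerivation_apply, ih]

theorem mdx_coe (α : Fin n → ℕ) (f : smoothFunctions ((Fin n → ℝ) × (Fin m → ℝ)) 𝔸) :
    mdx α (f : (Fin n → ℝ) × (Fin m → ℝ) → 𝔸) =
      (Derivation.mpow (fun i => lineDerivation (Pi.single i 1, 0)) α f :
        (Fin n → ℝ) × (Fin m → ℝ) → 𝔸) :=
  (coe_foldr_lineDerivation_apply _ _ α f).symm

theorem mdy_coe (β : Fin m → ℕ) (f : smoothFunctions ((Fin n → ℝ) × (Fin m → ℝ)) 𝔸) :
    mdy β (f : (Fin n → ℝ) × (Fin m → ℝ) → 𝔸) =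
      (Derivation.mpow (fun j => lineDerivation (0, Pi.single j 1)) β f :
        (Fin n → ℝ) × (Fin m → ℝ) → 𝔸) :=
  (coe_foldr_lineDerivation_apply _ _ β f).symm

theorem mdx_mdy_mul_apply {f g : (Fin n → ℝ) × (Fin m → ℝ) → 𝔸} (hf : ContDiff ℝ ∞ f)
    (hg : ContDiff ℝ ∞ g) (α : Fin n → ℕ) (β : Fin m → ℕ) (p : (Fin n → ℝ) × (Fin m → ℝ)) :
    mdx α (mdy β (fun q => f q * g q)) p =
      ∑ δ ∈ Iic β, mchoose β δ • ∑ γ ∈ Iic α, mchoose α γ •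
        (mdx γ (mdy δ f) p * mdx (α - γ) (mdy (β - δ) g) p) := by
  lift f to smoothFunctions ((Fin n → ℝ) × (Fin m → ℝ)) 𝔸 using hf
  lift g to smoothFunctions ((Fin n → ℝ) × (Fin m → ℝ)) 𝔸 using hg
  change mdx α (mdy β ((f * g : smoothFunctions _ 𝔸) : (Fin n → ℝ) × (Fin m → ℝ) → 𝔸)) p = _
  rw [mdy_coe, mdx_coe, Derivation.mpow_apply_mul, map_sum]
  simp only [map_nsmul, Derivation.mpow_apply_mul, AddSubmonoidClass.coe_finsetSum,
    AddSubmonoidClass.coe_nsmul, Subalgebra.coe_mul, Finset.sum_apply, Pi.smul_apply,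
    Pi.mul_apply, mdy_coe, mdx_coe]

theorem norm_mdx_mdy_mul_le {f g : (Fin n → ℝ) × (Fin m → ℝ) → 𝔸} (hf : ContDiff ℝ ∞ f)
    (hg : ContDiff ℝ ∞ g) (α : Fin n → ℕ) (β : Fin m → ℕ) (p : (Fin n → ℝ) × (Fin m → ℝ)) :
    ‖mdx α (mdy β (fun q => f q * g q)) p‖ ≤
      ∑ γ ∈ Iic α, ∑ δ ∈ Iic β, ((mchoose α γ * mchoose β δ : ℕ) : ℝ) *
        (‖mdx γ (mdy δ f) p‖ * ‖mdx (α - γ) (mdy (β - δ) g) p‖) := by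
  rw [mdx_mdy_mul_apply hf hg, sum_comm]
  refine (norm_sum_le _ _).trans (sum_le_sum fun δ _ => norm_nsmul_le.trans ?_)
  calc (mchoose β δ : ℝ) * ‖∑ γ ∈ Iic α, mchoose α γ •
        (mdx γ (mdy δ f) p * mdx (α - γ) (mdy (β - δ) g) p)‖
      ≤ (mchoose β δ : ℝ) * ∑ γ ∈ Iic α, (mchoose α γ : ℝ) *
        (‖mdx γ (mdy δ f) p‖ * ‖mdx (α - γ) (mdy (β - δ) g) p‖) := by
        gcongr
        exact (norm_sum_le _ _).trans (sum_le_sum fun γ _ =>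
          norm_nsmul_le.trans (by gcongr; exact norm_mul_le _ _))
    _ = _ := by
        rw [mul_sum]
        exact sum_congr rfl fun γ _ => by push_cast; ring

theorem norm_mdx_mdy_mul_mul_gevreyWeight_le {d e : ℕ}
    {f g : (Fin d → ℝ) × (Fin e → ℝ) → 𝔸} (hf : ContDiff ℝ ∞ f) (hg : ContDiff ℝ ∞ g)
    {s h T W : ℝ} (hs : 1 ≤ s) (hh : 0 < h) (hT : 0 ≤ T) (hW : 0 < W) (m k m' k' : ℝ)
    (α : Fin d → ℕ) (β : Fin e → ℕ) (p : (Fin d → ℝ) × (Fin e → ℝ)) :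
    ‖mdx α (mdy β (fun q => f q * g q)) p‖ * gevreyWeight s h T (m + m') (k + k') W α β ≤
      ∑ γ ∈ Iic α, ∑ δ ∈ Iic β,
        (‖mdx γ (mdy δ f) p‖ * gevreyWeight s h T m k W γ δ) *
        (‖mdx (α - γ) (mdy (β - δ) g) p‖ * gevreyWeight s h T m' k' W (α - γ) (β - δ)) := by
  calc _ ≤ (∑ γ ∈ Iic α, ∑ δ ∈ Iic β, ((mchoose α γ * mchoose β δ : ℕ) : ℝ) *
          (‖mdx γ (mdy δ f) p‖ * ‖mdx (α - γ) (mdy (β - δ) g) p‖)) *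
          gevreyWeight s h T (m + m') (k + k') W α β :=
        mul_le_mul_of_nonneg_right (norm_mdx_mdy_mul_le hf hg α β p)
          (gevreyWeight_nonneg hh.le hT hW.le _ _ _ _)
    _ = ∑ γ ∈ Iic α, ∑ δ ∈ Iic β, (((mchoose α γ * mchoose β δ : ℕ) : ℝ) *
          gevreyWeight s h T (m + m') (k + k') W α β) *
          (‖mdx γ (mdy δ f) p‖ * ‖mdx (α - γ) (mdy (β - δ) g) p‖) := by
        simp only [sum_mul]
        exact sum_congr rfl fun γ _ => sum_congr rfl fun δ _ => by ring
    _ ≤ ∑ γ ∈ Iic α, ∑ δ ∈ Iic β, (gevreyWeight s h T m k W γ δ *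
          gevreyWeight s h T m' k' W (α - γ) (β - δ)) *
          (‖mdx γ (mdy δ f) p‖ * ‖mdx (α - γ) (mdy (β - δ) g) p‖) := by
        refine sum_le_sum fun γ hγ => sum_le_sum fun δ hδ => mul_le_mul_of_nonneg_right ?_
          (by positivity)
        exact mchoose_mul_gevreyWeight_le hs hh hT hW m k m' k' (mem_Iic.mp hγ) (mem_Iic.mp hδ)
    _ = _ := sum_congr rfl fun γ _ => sum_congr rfl fun δ _ => by ring

theorem ofReal_norm_mdx_mdy_mul_le {d e : ℕ} {f g : (Fin d → ℝ) × (Fin e → ℝ) → 𝔸}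
    (hf : ContDiff ℝ ∞ f) (hg : ContDiff ℝ ∞ g) {s h T W : ℝ} (hs : 1 ≤ s) (hh : 0 < h)
    (hT : 0 ≤ T) (hW : 0 < W) (m k m' k' : ℝ) (α : Fin d → ℕ) (β : Fin e → ℕ)
    (p : (Fin d → ℝ) × (Fin e → ℝ)) :
    ENNReal.ofReal (‖mdx α (mdy β (fun q => f q * g q)) p‖ *
        gevreyWeight s h T (m + m') (k + k') W α β) ≤
      ∑ γ ∈ Iic α, ∑ δ ∈ Iic β,
        ENNReal.ofReal (‖mdx γ (mdy δ f) p‖ * gevreyWeight s h T m k W γ δ) *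
        ENNReal.ofReal (‖mdx (α - γ) (mdy (β - δ) g) p‖ *
          gevreyWeight s h T m' k' W (α - γ) (β - δ)) := by
  have hterm (γ : Fin d → ℕ) (δ : Fin e → ℕ) (m k : ℝ) (u : (Fin d → ℝ) × (Fin e → ℝ) → 𝔸) :
      0 ≤ ‖mdx γ (mdy δ u) p‖ * gevreyWeight s h T m k W γ δ :=
    mul_nonneg (norm_nonneg _) (gevreyWeight_nonneg hh.le hT hW.le _ _ _ _)
  refine (ENNReal.ofReal_le_ofReal
    (norm_mdx_mdy_mul_mul_gevreyWeight_le hf hg hs hh hT hW m k m' k' α β p)).trans_eq ?_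
  rw [ENNReal.ofReal_sum_of_nonneg fun γ _ =>
    sum_nonneg fun δ _ => mul_nonneg (hterm _ _ _ _ _) (hterm _ _ _ _ _)]
  refine sum_congr rfl fun γ _ => ?_
  rw [ENNReal.ofReal_sum_of_nonneg fun δ _ => mul_nonneg (hterm _ _ _ _ _) (hterm _ _ _ _ _)]
  exact sum_congr rfl fun δ _ => ENNReal.ofReal_mul (hterm _ _ _ _ _)

end SmoothFunctions

theorem ENNReal.tsum_sum_Iic_mul_sub {ι : Type*} [Fintype ι] [DecidableEq ι]
    (f g : (ι → ℕ) → ℝ≥0∞) :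
    ∑' μ, ∑ ν ∈ Iic μ, f ν * g (μ - ν) = (∑' ν, f ν) * ∑' ρ, g ρ := by
  classical
  have hIic (μ : ι → ℕ) : ∑ ν ∈ Iic μ, f ν * g (μ - ν) =
      ∑' ν, if ν ≤ μ then f ν * g (μ - ν) else 0 := by
    rw [tsum_eq_sum (s := Iic μ) fun ν hν => if_neg (by simpa using hν)]
    exact sum_congr rfl fun ν hν => (if_pos (mem_Iic.mp hν)).symm
  have hshift (ν : ι → ℕ) : ∑' μ, (if ν ≤ μ then f ν * g (μ - ν) else 0) =
      f ν * ∑' ρ, g ρ := by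
    rw [← ENNReal.tsum_mul_left, ← (add_right_injective ν).tsum_eq]
    · simp
    · intro μ hμ
      have hle : ν ≤ μ := by by_contra hc; exact hμ (if_neg hc)
      exact ⟨μ - ν, add_tsub_cancel_of_le hle⟩
  simp only [hIic]
  rw [ENNReal.tsum_comm]
  simp only [hshift, ENNReal.tsum_mul_right]

theorem ENNReal.tsum_tsum_sum_Iic_mul_sub {ι κ : Type*} [Fintype ι] [DecidableEq ι] [Fintype κ]
    [DecidableEq κ] (f g : (ι → ℕ) → (κ → ℕ) → ℝ≥0∞) :
    ∑' (α) (β), ∑ γ ∈ Iic α, ∑ δ ∈ Iic β, f γ δ * g (α - γ) (β - δ) =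
      (∑' (α) (β), f α β) * ∑' (α) (β), g α β := by
  calc ∑' (α) (β), ∑ γ ∈ Iic α, ∑ δ ∈ Iic β, f γ δ * g (α - γ) (β - δ)
      = ∑' α, ∑ γ ∈ Iic α, (∑' β, f γ β) * ∑' β, g (α - γ) β := by
        refine tsum_congr fun α => ?_
        rw [Summable.tsum_finsetSum fun γ _ => ENNReal.summable]
        exact sum_congr rfl fun γ _ => ENNReal.tsum_sum_Iic_mul_sub _ _
    _ = _ := ENNReal.tsum_sum_Iic_mul_sub (fun γ => ∑' β, f γ β) (fun α => ∑' β, g α β)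

theorem qnorm_eq_iSup_tsum_gevreyWeight (s h T m k : ℝ)
    (a : (Fin n → ℝ) × (Fin (n - 1) → ℝ) → ℂ) :
    qnorm n s h T m k a = ⨆ p : (Fin n → ℝ) × (Fin (n - 1) → ℝ),
      ∑' (α : Fin n → ℕ) (β : Fin (n - 1) → ℕ), ENNReal.ofReal (‖mdx α (mdy β a) p‖ *
        gevreyWeight s h T m k (Real.sqrt (1 + ∑ i, (p.2 i) ^ 2)) α β) := by
  simp only [qnorm, gevreyWeight, mul_assoc, mul_div_assoc]

theorem qnorm_submul_general
    (s : ℝ) (hs : 1 < s) (h : ℝ) (hh : h ∈ Set.Ioc (0:ℝ) 1)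
    (T : ℝ) (hT : 0 < T) (n : ℕ)
    (m k m' k' : ℝ)
    (a a' : (Fin n → ℝ) × (Fin (n-1) → ℝ) → ℂ)
    (ha : ContDiff ℝ (⊤ : ℕ∞) a) (ha' : ContDiff ℝ (⊤ : ℕ∞) a') :
    qnorm n s h T (m + m') (k + k') (fun p => a p * a' p) ≤
      qnorm n s h T m k a * qnorm n s h T m' k' a' := by
  rw [qnorm_eq_iSup_tsum_gevreyWeight, qnorm_eq_iSup_tsum_gevreyWeight,
    qnorm_eq_iSup_tsum_gevreyWeight]
  refine iSup_le fun p => ?_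
  set W := Real.sqrt (1 + ∑ i, (p.2 i) ^ 2)
  have hW : 0 < W := Real.sqrt_pos.mpr (by positivity)
  set u : (Fin n → ℕ) → (Fin (n - 1) → ℕ) → ℝ≥0∞ := fun γ δ =>
    ENNReal.ofReal (‖mdx γ (mdy δ a) p‖ * gevreyWeight s h T m k W γ δ)
  set u' : (Fin n → ℕ) → (Fin (n - 1) → ℕ) → ℝ≥0∞ := fun γ δ =>
    ENNReal.ofReal (‖mdx γ (mdy δ a') p‖ * gevreyWeight s h T m' k' W γ δ)
  calc _ ≤ ∑' (α) (β), ∑ γ ∈ Iic α, ∑ δ ∈ Iic β, u γ δ * u' (α - γ) (β - δ) :=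
        ENNReal.tsum_le_tsum fun α => ENNReal.tsum_le_tsum fun β =>
          ofReal_norm_mdx_mdy_mul_le ha ha' hs.le hh.1 hT.le hW m k m' k' α β p
    _ = (∑' (α) (β), u α β) * ∑' (α) (β), u' α β := ENNReal.tsum_tsum_sum_Iic_mul_sub u u'
    _ ≤ _ := mul_le_mul' (le_iSup_of_le p le_rfl) (le_iSup_of_le p le_rfl)

/-- **Submultiplicativity of Gevrey quasi-norms** (inequality (3.25)):
`N̄_{m+m',k+k'}(a·a',T) ≤ N̄_{m,k}(a,T) · N̄_{m',k'}(a',T)`. -/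
theorem qnorm_submul
    (s : ℝ) (hs : 1 < s) (h : ℝ) (hh : h ∈ Set.Ioc (0:ℝ) 1)
    (T : ℝ) (hT : 0 < T) (n : ℕ) (hn : 2 ≤ n)
    (m k m' k' : ℝ)
    (a a' : (Fin n → ℝ) × (Fin (n-1) → ℝ) → ℂ)
    (ha : ContDiff ℝ (⊤ : ℕ∞) a) (ha' : ContDiff ℝ (⊤ : ℕ∞) a') :
    qnorm n s h T (m + m') (k + k') (fun p => a p * a' p) ≤
      qnorm n s h T m k a * qnorm n s h T m' k' a' :=
  qnorm_submul_general s hs h hh T hT n m k m' k' a a' ha ha'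
end
end

section
/- (Quasi-norm induction, the engine of Lemma 3.2, inequalities (3.28)–(3.32)) Let s > 1, M > 0, T₀ > 0 and ε₀ ∈ (0,1]. Let (u_j)_{j≥0} be a sequence of functions u_j : (0,T₀] → [0,∞] such that u₀ is nondecreasing and such that for every j ≥ 1, every ε ∈ (0,ε₀] and every T ∈ (0,T₀] with T(1+ε)^s ≤ T₀, one has u_j(T) ≤ M ε^{−s} T^{−1} u_{j−1}(T(1+ε)^s). Then for every δ with 0 < δ ≤ min(ε₀, (log 2)/s) and every j ≥ 1 and every T ∈ (0, T₀/2], one has u_j(T) ≤ M^j T^{−j} δ^{−sj} j^{sj} u₀(2T). -/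
open scoped ENNReal

/-- **Quasi-norm induction** (the engine of Lemma 3.2, inequalities (3.28)–(3.32)): if a
sequence of extended-real quantities `u_j(T)` satisfies the recursive bound
`u_j(T) ≤ M ε^{-s} T^{-1} u_{j-1}(T(1+ε)^s)`, then
`u_j(T) ≤ M^j T^{-j} δ^{-sj} j^{sj} u₀(2T)` for small `δ` and `T ≤ T₀/2`. -/
theorem quasinorm_induction
    (s : ℝ) (hs : 1 < s) (M T₀ ε₀ : ℝ) (hM : 0 < M) (hT₀ : 0 < T₀)
    (hε₀ : ε₀ ∈ Set.Ioc (0:ℝ) 1)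
    (u : ℕ → ℝ → ℝ≥0∞)
    (hmono : ∀ T T' : ℝ, 0 < T → T ≤ T' → T' ≤ T₀ → u 0 T ≤ u 0 T')
    (hrec : ∀ j : ℕ, 1 ≤ j → ∀ ε ∈ Set.Ioc (0:ℝ) ε₀, ∀ T ∈ Set.Ioc (0:ℝ) T₀,
      T * (1 + ε) ^ s ≤ T₀ →
      u j T ≤ ENNReal.ofReal (M * ε ^ (-s) * T⁻¹) * u (j - 1) (T * (1 + ε) ^ s)) :
    ∀ δ : ℝ, 0 < δ → δ ≤ min ε₀ (Real.log 2 / s) →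
      ∀ j : ℕ, 1 ≤ j → ∀ T ∈ Set.Ioc (0:ℝ) (T₀ / 2),
        u j T ≤ ENNReal.ofReal (M ^ j * (T ^ j)⁻¹ * δ ^ (-(s * (j : ℝ))) *
            (j : ℝ) ^ (s * (j : ℝ))) * u 0 (2 * T) := by
  intro δ hδ hδle j hj T hT
  obtain ⟨hT0, hT2⟩ := hT
  have hjpos : (0:ℝ) < j := by exact_mod_cast Nat.lt_of_lt_of_le Nat.zero_lt_one hj
  have hs0 : (0:ℝ) < s := by linarith
  set ε := δ / j with hεdef
  have hε : 0 < ε := div_pos hδ hjpos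
  have hεδ : ε ≤ δ := by
    rw [hεdef, div_le_iff₀ hjpos]
    nlinarith [hδ.le, (by exact_mod_cast hj : (1:ℝ) ≤ j)]
  have hεε₀ : ε ≤ ε₀ := hεδ.trans ((le_min_iff.mp hδle).1)
  have hsδ : s * δ ≤ Real.log 2 := by
    have h2 := (le_min_iff.mp hδle).2
    rw [le_div_iff₀ hs0] at h2
    linarith
  set c := (1 + ε) ^ s with hcdef
  have h1ε : (0:ℝ) < 1 + ε := by linarith
  have hc1 : 1 ≤ c := Real.one_le_rpow (by linarith) hs0.le
  have hc0 : 0 < c := lt_of_lt_of_le one_pos hc1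
  have hcj : c ^ j ≤ 2 := by
    have hlog : Real.log (1 + ε) ≤ ε := by
      have := Real.log_le_sub_one_of_pos h1ε
      linarith
    have hcexp : c = Real.exp (s * Real.log (1 + ε)) := by
      rw [hcdef, Real.rpow_def_of_pos h1ε, mul_comm]
    have : c ^ j = Real.exp ((j : ℝ) * (s * Real.log (1 + ε))) := by
      rw [hcexp, Real.exp_nat_mul]
    rw [this]
    calc Real.exp ((j : ℝ) * (s * Real.log (1 + ε)))
        ≤ Real.exp (Real.log 2) := by
          apply Real.exp_le_exp.mpr
          have hje : (j : ℝ) * ε = δ := by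
            rw [hεdef]; field_simp
          calc (j : ℝ) * (s * Real.log (1 + ε)) ≤ (j : ℝ) * (s * ε) := by
                apply mul_le_mul_of_nonneg_left _ hjpos.le
                exact mul_le_mul_of_nonneg_left hlog hs0.le
            _ = s * ((j:ℝ) * ε) := by ring
            _ = s * δ := by rw [hje]
            _ ≤ Real.log 2 := hsδ
      _ = 2 := Real.exp_log two_pos
  have hTck : ∀ k, k ≤ j → T * c ^ k ≤ T₀ := by
    intro k hk
    have h1 : c ^ k ≤ c ^ j := pow_le_pow_right₀ hc1 hk
    calc T * c ^ k ≤ T * 2 := by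
          apply mul_le_mul_of_nonneg_left (h1.trans hcj) hT0.le
      _ ≤ T₀ := by linarith
  set B := ENNReal.ofReal (M * ε ^ (-s) * T⁻¹) with hBdef
  have key : ∀ k, k ≤ j → u j T ≤ B ^ k * u (j - k) (T * c ^ k) := by
    intro k
    induction k with
    | zero => intro _; simp
    | succ k ih =>
      intro hk
      have hk' : k ≤ j := Nat.le_of_succ_le hk
      have hjk1 : 1 ≤ j - k := Nat.le_sub_of_add_le (by omega)
      have hTk0 : 0 < T * c ^ k := mul_pos hT0 (pow_pos hc0 k)
      have hstep := hrec (j - k) hjk1 ε ⟨hε, hεε₀⟩ (T * c ^ k)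
        ⟨hTk0, hTck k hk'⟩ (by
          rw [mul_assoc, ← pow_succ]
          exact hTck (k + 1) hk)
      have heq1 : T * c ^ k * (1 + ε) ^ s = T * c ^ (k + 1) := by
        rw [← hcdef, mul_assoc, ← pow_succ]
      have heq2 : j - k - 1 = j - (k + 1) := by omega
      rw [heq1, heq2] at hstep
      have hstep2 : u (j - k) (T * c ^ k) ≤ B * u (j - (k + 1)) (T * c ^ (k + 1)) := by
        refine hstep.trans (mul_le_mul_left ?_ _)
        apply ENNReal.ofReal_le_ofReal
        have hMε : 0 ≤ M * ε ^ (-s) := by positivity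
        apply mul_le_mul_of_nonneg_left _ hMε
        apply inv_anti₀ hT0
        nlinarith [pow_pos hc0 k, one_le_pow₀ hc1 (n := k), hT0]
      calc u j T ≤ B ^ k * u (j - k) (T * c ^ k) := ih hk'
        _ ≤ B ^ k * (B * u (j - (k + 1)) (T * c ^ (k + 1))) := mul_le_mul_right hstep2 _
        _ = B ^ (k + 1) * u (j - (k + 1)) (T * c ^ (k + 1)) := by
            rw [← mul_assoc, ← pow_succ]
  have hfinal := key j le_rfl
  rw [Nat.sub_self] at hfinal
  have hmono' : u 0 (T * c ^ j) ≤ u 0 (2 * T) := by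
    apply hmono _ _ (mul_pos hT0 (pow_pos hc0 j))
    · rw [mul_comm 2 T]
      exact mul_le_mul_of_nonneg_left hcj hT0.le
    · linarith
  have hBj : B ^ j = ENNReal.ofReal (M ^ j * (T ^ j)⁻¹ * δ ^ (-(s * (j : ℝ))) *
      (j : ℝ) ^ (s * (j : ℝ))) := by
    rw [hBdef, ← ENNReal.ofReal_pow (by positivity)]
    congr 1
    have hεs : (ε ^ (-s)) ^ j = δ ^ (-(s * (j : ℝ))) * (j : ℝ) ^ (s * (j : ℝ)) := by
      rw [← Real.rpow_natCast (ε ^ (-s)) j, ← Real.rpow_mul hε.le,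
        show (-s) * (j : ℝ) = -(s * (j : ℝ)) by ring,
        hεdef, Real.div_rpow hδ.le hjpos.le,
        Real.rpow_neg hjpos.le, div_eq_mul_inv, inv_inv]
    rw [mul_pow, mul_pow, inv_pow, hεs]
    ring
  rw [hBj] at hfinal
  exact hfinal.trans (mul_le_mul_right hmono' _)
end

section
/- (Uniform non-characteristic lower bound for homogeneous phases, inequality (A.1.7)) Let n, N ≥ 1, let U ⊆ ℝ^n be open, K ⊆ U compact, and let φ : U × (ℝ^N ∖ {0}) → ℝ be C¹ and positively homogeneous of degree 1 in θ (φ(x,λθ) = λφ(x,θ) for λ > 0). Assume dφ ≠ 0, i.e. ∂_x φ(x,θ) and ∂_θ φ(x,θ) never vanish simultaneously on K × (ℝ^N∖{0}). Let A ⊆ ℝ^N ∖ {0} and V ⊆ ℝ^n ∖ {0} be closed cones such that for all x ∈ K and θ ∈ A with ∂_θ φ(x,θ) = 0 one has ∂_x φ(x,θ) ∉ V. Then there exists c > 0 such that for all x ∈ K, θ ∈ A and ξ ∈ V: |∂_x φ(x,θ) − ξ| + |θ| · |∂_θ φ(x,θ)| ≥ c (|θ| + |ξ|). -/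
/-!
Both sides are homogeneous of degree one in `(θ, ξ)`, since `∂_xφ` is homogeneous of degree one
and `∂_θφ` of degree zero in `θ`; in particular `|∂_xφ(x,θ)| ≤ C|θ|` by compactness of
`K × (A ∩ S^{N-1})`. When `|ξ| > 2C|θ|`, the term `|∂_xφ − ξ| ≥ |ξ| − C|θ|` alone is comparable
to `|θ| + |ξ|`. When `|ξ| ≤ 2C|θ|`, rescale to `|θ| = 1`: the left side becomes a continuous
function on the compact set `K × (A ∩ S^{N-1}) × ((V ∪ {0}) ∩ B(0, 2C))`, which has no zero
because of `dφ ≠ 0` (at `ξ = 0`) and the non-characteristic hypothesis (at `ξ ∈ V`); its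
positive minimum gives the bound.
-/

open scoped BigOperators Real
open MeasureTheory

noncomputable section

variable {n m : ℕ} {E : Type*} [NormedAddCommGroup E] [NormedSpace ℝ E]

open Set Metric Filter Topology

lemma isClosed_insert_zero {Y : Type*} [TopologicalSpace Y] [T1Space Y] [Zero Y] {s : Set Y}
    (hs : ∀ y, y ≠ 0 → y ∈ closure s → y ∈ s) : IsClosed (insert 0 s) := by
  convert (isClosed_singleton (x := (0 : Y))).union (isClosed_closure (s := s)) using 1
  ext y
  rcases eq_or_ne y 0 with rfl | hy
  · simp
  · simp only [mem_insert_iff, mem_union, mem_singleton_iff, hy, false_or]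
    exact ⟨fun h => subset_closure h, hs y hy⟩

lemma isCompact_inter_sphere_of_isClosed_insert_zero {F : Type*} [NormedAddCommGroup F]
    [ProperSpace F] {A : Set F} (hA : IsClosed (insert 0 A)) :
    IsCompact (A ∩ sphere (0 : F) 1) := by
  rw [← insert_inter_of_notMem (by simp : (0 : F) ∉ sphere (0 : F) 1)]
  exact (isCompact_sphere 0 1).inter_left hA

section Cone

variable {X Y F G : Type*} [NormedAddCommGroup Y] [NormedAddCommGroup F] [NormedAddCommGroup G]
  {K : Set X} {A : Set F} {V : Set Y} {g : X × F → Y} {h : X × F → G}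

lemma exists_eq_smul_of_mem_cone [NormedSpace ℝ F] (hA0 : 0 ∉ A)
    (hAcone : ∀ θ ∈ A, ∀ t : ℝ, 0 < t → t • θ ∈ A) {θ : F} (hθ : θ ∈ A) :
    ∃ t : ℝ, 0 < t ∧ ∃ u ∈ A ∩ sphere 0 1, θ = t • u := by
  have hθ0 : θ ≠ 0 := ne_of_mem_of_not_mem hθ hA0
  have hpos : 0 < ‖θ‖ := norm_pos_iff.2 hθ0
  refine ⟨‖θ‖, hpos, ‖θ‖⁻¹ • θ, ⟨hAcone θ hθ _ (inv_pos.2 hpos), ?_⟩,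
    (smul_inv_smul₀ hpos.ne' θ).symm⟩
  simp [norm_smul, hpos.ne']

lemma exists_norm_le_mul_norm_of_homogeneous [TopologicalSpace X] [NormedSpace ℝ Y]
    [NormedSpace ℝ F] [ProperSpace F] (hK : IsCompact K) (hA : IsClosed (insert 0 A))
    (hA0 : 0 ∉ A) (hAcone : ∀ θ ∈ A, ∀ t : ℝ, 0 < t → t • θ ∈ A)
    (hg : ContinuousOn g (K ×ˢ A))
    (hg_hom : ∀ x ∈ K, ∀ θ ∈ A, ∀ t : ℝ, 0 < t → g (x, t • θ) = t • g (x, θ)) :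
    ∃ C > 0, ∀ x ∈ K, ∀ θ ∈ A, ‖g (x, θ)‖ ≤ C * ‖θ‖ := by
  obtain ⟨C, hC⟩ := (hK.prod (isCompact_inter_sphere_of_isClosed_insert_zero hA))
    |>.exists_bound_of_continuousOn (hg.mono (prod_mono subset_rfl inter_subset_left))
  refine ⟨max C 1, by positivity, fun x hx θ hθ => ?_⟩
  obtain ⟨t, ht, u, hu, rfl⟩ := exists_eq_smul_of_mem_cone hA0 hAcone hθ
  rw [hg_hom x hx u hu.1 t ht, norm_smul, norm_smul, mem_sphere_zero_iff_norm.1 hu.2, mul_one,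
    mul_comm]
  gcongr
  exact (hC (x, u) ⟨hx, hu⟩).trans (le_max_left C 1)

lemma exists_pos_le_of_normalized [TopologicalSpace X] [ProperSpace Y] [ProperSpace F]
    (hK : IsCompact K) (hA : IsClosed (insert 0 A)) (hV : IsClosed (insert 0 V))
    (hg : ContinuousOn g (K ×ˢ A)) (hh : ContinuousOn h (K ×ˢ A))
    (hnc : ∀ x ∈ K, ∀ θ ∈ A, h (x, θ) = 0 → g (x, θ) ∉ insert 0 V) (R : ℝ) :
    ∃ m > 0, ∀ x ∈ K, ∀ u ∈ A ∩ sphere 0 1, ∀ η ∈ insert 0 V, ‖η‖ ≤ R →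
      m ≤ ‖g (x, u) - η‖ + ‖h (x, u)‖ := by
  set T := K ×ˢ ((A ∩ sphere (0 : F) 1) ×ˢ (insert 0 V ∩ closedBall (0 : Y) R))
  have hT : IsCompact T := hK.prod ((isCompact_inter_sphere_of_isClosed_insert_zero hA).prod
    ((isCompact_closedBall 0 R).inter_left hV))
  have hmaps : MapsTo (fun q : X × F × Y => (q.1, q.2.1)) T (K ×ˢ A) :=
    fun q hq => ⟨hq.1, hq.2.1.1⟩
  have hcont : Continuous (fun q : X × F × Y => (q.1, q.2.1)) := by fun_prop
  have hF : ContinuousOn (fun q : X × F × Y => ‖g (q.1, q.2.1) - q.2.2‖ + ‖h (q.1, q.2.1)‖) T :=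
    ((hg.comp hcont.continuousOn hmaps).sub continuous_snd.snd.continuousOn).norm.add
      (hh.comp hcont.continuousOn hmaps).norm
  have hpos : ∀ q ∈ T, 0 < ‖g (q.1, q.2.1) - q.2.2‖ + ‖h (q.1, q.2.1)‖ := by
    rintro ⟨x, u, η⟩ ⟨hx, hu, hη⟩
    refine lt_of_le_of_ne (by positivity) fun hzero => ?_
    obtain ⟨hgη, hh0⟩ := (add_eq_zero_iff_of_nonneg (norm_nonneg _) (norm_nonneg _)).1 hzero.symm
    exact hnc x hx u hu.1 (norm_eq_zero.1 hh0) (sub_eq_zero.1 (norm_eq_zero.1 hgη) ▸ hη.1)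
  obtain ⟨m, hm, hmin⟩ := hT.exists_forall_le' hF hpos
  exact ⟨m, hm, fun x hx u hu η hη hηR =>
    hmin (x, u, η) ⟨hx, hu, hη, mem_closedBall_zero_iff.2 hηR⟩⟩

lemma mul_norm_le_of_norm_le_mul_norm [NormedSpace ℝ Y] [NormedSpace ℝ F] {m R : ℝ}
    (hA0 : 0 ∉ A) (hAcone : ∀ θ ∈ A, ∀ t : ℝ, 0 < t → t • θ ∈ A)
    (hVcone : ∀ ξ ∈ V, ∀ t : ℝ, 0 < t → t • ξ ∈ V)
    (hg_hom : ∀ x ∈ K, ∀ θ ∈ A, ∀ t : ℝ, 0 < t → g (x, t • θ) = t • g (x, θ))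
    (hh_hom : ∀ x ∈ K, ∀ θ ∈ A, ∀ t : ℝ, 0 < t → h (x, t • θ) = h (x, θ))
    (hm : ∀ x ∈ K, ∀ u ∈ A ∩ sphere 0 1, ∀ η ∈ insert 0 V, ‖η‖ ≤ R →
      m ≤ ‖g (x, u) - η‖ + ‖h (x, u)‖)
    {x : X} (hx : x ∈ K) {θ : F} (hθ : θ ∈ A) {ξ : Y} (hξ : ξ ∈ V) (hξθ : ‖ξ‖ ≤ R * ‖θ‖) :
    m * ‖θ‖ ≤ ‖g (x, θ) - ξ‖ + ‖θ‖ * ‖h (x, θ)‖ := by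
  obtain ⟨t, ht, u, hu, rfl⟩ := exists_eq_smul_of_mem_cone hA0 hAcone hθ
  obtain ⟨η, rfl⟩ : ∃ η, ξ = t • η := ⟨t⁻¹ • ξ, (smul_inv_smul₀ ht.ne' ξ).symm⟩
  have hηV : η ∈ V := by simpa [inv_smul_smul₀ ht.ne'] using hVcone _ hξ t⁻¹ (inv_pos.2 ht)
  have hu1 : ‖u‖ = 1 := mem_sphere_zero_iff_norm.1 hu.2
  simp only [norm_smul, Real.norm_of_nonneg ht.le, hu1, mul_one] at hξθ ⊢
  rw [hg_hom x hx u hu.1 t ht, hh_hom x hx u hu.1 t ht, ← smul_sub, norm_smul,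
    Real.norm_of_nonneg ht.le, mul_comm m, ← mul_add]
  gcongr
  exact hm x hx u hu η (Or.inr hηV) (le_of_mul_le_mul_left (by linarith) ht)

theorem exists_lower_bound_of_homogeneous [TopologicalSpace X] [NormedSpace ℝ Y]
    [NormedSpace ℝ F] [ProperSpace Y] [ProperSpace F] (hK : IsCompact K)
    (hA : IsClosed (insert 0 A)) (hA0 : 0 ∉ A) (hAcone : ∀ θ ∈ A, ∀ t : ℝ, 0 < t → t • θ ∈ A)
    (hV : IsClosed (insert 0 V)) (hVcone : ∀ ξ ∈ V, ∀ t : ℝ, 0 < t → t • ξ ∈ V)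
    (hg : ContinuousOn g (K ×ˢ A)) (hh : ContinuousOn h (K ×ˢ A))
    (hg_hom : ∀ x ∈ K, ∀ θ ∈ A, ∀ t : ℝ, 0 < t → g (x, t • θ) = t • g (x, θ))
    (hh_hom : ∀ x ∈ K, ∀ θ ∈ A, ∀ t : ℝ, 0 < t → h (x, t • θ) = h (x, θ))
    (hnc : ∀ x ∈ K, ∀ θ ∈ A, h (x, θ) = 0 → g (x, θ) ∉ insert 0 V) :
    ∃ c > 0, ∀ x ∈ K, ∀ θ ∈ A, ∀ ξ ∈ V,
      c * (‖θ‖ + ‖ξ‖) ≤ ‖g (x, θ) - ξ‖ + ‖θ‖ * ‖h (x, θ)‖ := by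
  obtain ⟨C, hC, hgC⟩ := exists_norm_le_mul_norm_of_homogeneous hK hA hA0 hAcone hg hg_hom
  obtain ⟨m, hm, hmin⟩ := exists_pos_le_of_normalized hK hA hV hg hh hnc (2 * C)
  set c := min m C / (1 + 2 * C)
  have hcm : c * (1 + 2 * C) = min m C := div_mul_cancel₀ _ (by positivity)
  refine ⟨c, by positivity, fun x hx θ hθ ξ hξ => ?_⟩
  have hc : 0 ≤ c := by positivity
  rcases le_or_gt ‖ξ‖ (2 * C * ‖θ‖) with hnear | hfar
  · calc c * (‖θ‖ + ‖ξ‖) ≤ c * (1 + 2 * C) * ‖θ‖ := by nlinarith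
      _ ≤ m * ‖θ‖ := by rw [hcm]; gcongr; exact min_le_left m C
      _ ≤ _ := mul_norm_le_of_norm_le_mul_norm hA0 hAcone hVcone hg_hom hh_hom hmin hx hθ hξ hnear
  · have hgξ : ‖ξ‖ - C * ‖θ‖ ≤ ‖g (x, θ) - ξ‖ := by
      have := norm_sub_norm_le ξ (g (x, θ))
      rw [norm_sub_rev] at this
      linarith [hgC x hx θ hθ]
    have hscaled : c * (‖θ‖ + ‖ξ‖) * (1 + 2 * C) ≤ (‖ξ‖ - C * ‖θ‖) * (1 + 2 * C) :=
      calc c * (‖θ‖ + ‖ξ‖) * (1 + 2 * C) = min m C * (‖θ‖ + ‖ξ‖) := by rw [mul_right_comm, hcm]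
        _ ≤ C * (‖θ‖ + ‖ξ‖) := by gcongr; exact min_le_right m C
        _ ≤ (‖ξ‖ - C * ‖θ‖) * (1 + 2 * C) := by
          nlinarith [mul_le_mul_of_nonneg_left hfar.le (by positivity : 0 ≤ 1 + C)]
    have := le_of_mul_le_mul_right hscaled (by positivity)
    nlinarith [mul_nonneg (norm_nonneg θ) (norm_nonneg (h (x, θ)))]

end Cone

section Homogeneity

variable {F G : Type*} [NormedAddCommGroup F] [NormedSpace ℝ F] [NormedAddCommGroup G]
  [NormedSpace ℝ G]

lemma fderiv_smul_snd_of_homogeneous {φ : E × F → G} {s : Set (E × F)} {t : ℝ} (hs : IsOpen s)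
    (hφ : DifferentiableOn ℝ φ s) (hhom : ∀ p ∈ s, φ (p.1, t • p.2) = t • φ p) {p : E × F}
    (hp : p ∈ s) (htp : (p.1, t • p.2) ∈ s) (v : E × F) :
    fderiv ℝ φ (p.1, t • p.2) (v.1, t • v.2) = t • fderiv ℝ φ p v := by
  let T : E × F →L[ℝ] E × F :=
    (ContinuousLinearMap.id ℝ E).prodMap (t • ContinuousLinearMap.id ℝ F)
  have hcomp : HasFDerivAt (φ ∘ T) ((fderiv ℝ φ (p.1, t • p.2)).comp T) p :=
    (hφ.differentiableAt (hs.mem_nhds htp)).hasFDerivAt.comp p T.hasFDerivAt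
  have heq : (fun q => t • φ q) =ᶠ[𝓝 p] φ ∘ T :=
    eventually_of_mem (hs.mem_nhds hp) fun q hq => (hhom q hq).symm
  have hderiv := ((hφ.differentiableAt (hs.mem_nhds hp)).hasFDerivAt.const_smul t).unique
    (hcomp.congr_of_eventuallyEq heq)
  exact (congrArg (fun L : E × F →L[ℝ] G => L v) hderiv).symm

end Homogeneity

section PartialGradient

def gradFst (φ : (Fin n → ℝ) × (Fin m → ℝ) → E) (p : (Fin n → ℝ) × (Fin m → ℝ)) : Fin n → E :=
  fun i => pdx i φ p

def gradSnd (φ : (Fin n → ℝ) × (Fin m → ℝ) → E) (p : (Fin n → ℝ) × (Fin m → ℝ)) : Fin m → E :=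
  fun j => pdy j φ p

variable {φ : (Fin n → ℝ) × (Fin m → ℝ) → E} {s : Set ((Fin n → ℝ) × (Fin m → ℝ))} {t : ℝ}
  {x : Fin n → ℝ} {θ : Fin m → ℝ}

lemma continuousOn_gradFst (hφ : ContinuousOn (fderiv ℝ φ) s) : ContinuousOn (gradFst φ) s :=
  continuousOn_pi.2 fun _ => hφ.clm_apply continuousOn_const

lemma continuousOn_gradSnd (hφ : ContinuousOn (fderiv ℝ φ) s) : ContinuousOn (gradSnd φ) s :=
  continuousOn_pi.2 fun _ => hφ.clm_apply continuousOn_const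

lemma gradFst_smul_snd (hs : IsOpen s) (hφ : DifferentiableOn ℝ φ s)
    (hhom : ∀ p ∈ s, φ (p.1, t • p.2) = t • φ p) (hp : (x, θ) ∈ s) (htp : (x, t • θ) ∈ s) :
    gradFst φ (x, t • θ) = t • gradFst φ (x, θ) := by
  funext i
  simpa [gradFst, pdx] using
    fderiv_smul_snd_of_homogeneous hs hφ hhom hp htp (Pi.single i 1, 0)

lemma gradSnd_smul_snd (hs : IsOpen s) (hφ : DifferentiableOn ℝ φ s)
    (hhom : ∀ p ∈ s, φ (p.1, t • p.2) = t • φ p) (ht : t ≠ 0) (hp : (x, θ) ∈ s)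
    (htp : (x, t • θ) ∈ s) :
    gradSnd φ (x, t • θ) = gradSnd φ (x, θ) := by
  funext j
  have h := fderiv_smul_snd_of_homogeneous hs hφ hhom hp htp (0, Pi.single j 1)
  rw [show ((0, Pi.single j 1) : (Fin n → ℝ) × (Fin m → ℝ)).1 = t • 0 by simp, ← Prod.smul_mk,
    map_smul] at h
  exact smul_right_injective E ht h

end PartialGradient

theorem homogeneous_noncharacteristic_lower_bound_general
    (n N : ℕ)
    (U : Set (Fin n → ℝ)) (hU : IsOpen U)
    (K : Set (Fin n → ℝ)) (hK : IsCompact K) (hKU : K ⊆ U)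
    (φ : (Fin n → ℝ) × (Fin N → ℝ) → ℝ)
    (hφ : ContDiffOn ℝ 1 φ (U ×ˢ {θ : Fin N → ℝ | θ ≠ 0}))
    (hhom : ∀ x ∈ U, ∀ θ : Fin N → ℝ, θ ≠ 0 → ∀ lam : ℝ, 0 < lam →
      φ (x, lam • θ) = lam * φ (x, θ))
    (hd : ∀ x ∈ K, ∀ θ : Fin N → ℝ, θ ≠ 0 →
      (∃ i : Fin n, pdx i φ (x, θ) ≠ 0) ∨ (∃ j : Fin N, pdy j φ (x, θ) ≠ 0))
    (A : Set (Fin N → ℝ)) (V : Set (Fin n → ℝ))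
    (hA0 : ∀ θ ∈ A, θ ≠ 0)
    (hAcone : ∀ θ ∈ A, ∀ lam : ℝ, 0 < lam → lam • θ ∈ A)
    (hAclosed : ∀ θ : Fin N → ℝ, θ ≠ 0 → θ ∈ closure A → θ ∈ A)
    (hVcone : ∀ ξ ∈ V, ∀ lam : ℝ, 0 < lam → lam • ξ ∈ V)
    (hVclosed : ∀ ξ : Fin n → ℝ, ξ ≠ 0 → ξ ∈ closure V → ξ ∈ V)
    (hnc : ∀ x ∈ K, ∀ θ ∈ A, (∀ j : Fin N, pdy j φ (x, θ) = 0) →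
      (fun i : Fin n => pdx i φ (x, θ)) ∉ V) :
    ∃ c > 0, ∀ x ∈ K, ∀ θ ∈ A, ∀ ξ ∈ V,
      ‖(fun i : Fin n => pdx i φ (x, θ)) - ξ‖ +
          ‖θ‖ * ‖fun j : Fin N => pdy j φ (x, θ)‖ ≥
        c * (‖θ‖ + ‖ξ‖) := by
  set Ω := U ×ˢ {θ : Fin N → ℝ | θ ≠ 0}
  have hΩ : IsOpen Ω := hU.prod isOpen_ne
  have hdiff : DifferentiableOn ℝ φ Ω := hφ.differentiableOn one_ne_zero
  have hcont : ContinuousOn (fderiv ℝ φ) Ω := hφ.continuousOn_fderiv_of_isOpen hΩ le_rfl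
  have hKA : K ×ˢ A ⊆ Ω := prod_mono hKU hA0
  have hhom' : ∀ t : ℝ, 0 < t → ∀ p ∈ Ω, φ (p.1, t • p.2) = t • φ p :=
    fun t ht p hp => hhom p.1 hp.1 p.2 hp.2 t ht
  have hnc' : ∀ x ∈ K, ∀ θ ∈ A, gradSnd φ (x, θ) = 0 → gradFst φ (x, θ) ∉ insert 0 V := by
    rintro x hx θ hθ hsnd (hfst | hfst)
    · rcases hd x hx θ (hA0 θ hθ) with ⟨i, hi⟩ | ⟨j, hj⟩
      exacts [hi (congrFun hfst i), hj (congrFun hsnd j)]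
    · exact hnc x hx θ hθ (congrFun hsnd) hfst
  obtain ⟨c, hc, hbound⟩ := exists_lower_bound_of_homogeneous hK (isClosed_insert_zero hAclosed)
    (fun h0 => hA0 0 h0 rfl) hAcone (isClosed_insert_zero hVclosed) hVcone
    ((continuousOn_gradFst hcont).mono hKA) ((continuousOn_gradSnd hcont).mono hKA)
    (fun x hx θ hθ t ht => gradFst_smul_snd hΩ hdiff (hhom' t ht) (hKA ⟨hx, hθ⟩)
      (hKA ⟨hx, hAcone θ hθ t ht⟩))
    (fun x hx θ hθ t ht => gradSnd_smul_snd hΩ hdiff (hhom' t ht) ht.ne' (hKA ⟨hx, hθ⟩)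
      (hKA ⟨hx, hAcone θ hθ t ht⟩))
    hnc'
  exact ⟨c, hc, hbound⟩

/-- **Uniform non-characteristic lower bound for homogeneous phases** (inequality (A.1.7)): if
`φ(x,θ)` is `C¹`, positively homogeneous of degree 1 in `θ`, with `dφ ≠ 0`, and the closed
cones `A`, `V` satisfy `∂_xφ(x,θ) ∉ V` whenever `∂_θφ(x,θ) = 0` with `x ∈ K`, `θ ∈ A`, then
`|∂_xφ(x,θ) − ξ| + |θ|·|∂_θφ(x,θ)| ≥ c(|θ| + |ξ|)` uniformly on `K × A × V`. -/
theorem homogeneous_noncharacteristic_lower_bound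
    (n N : ℕ) (hn : 1 ≤ n) (hN : 1 ≤ N)
    (U : Set (Fin n → ℝ)) (hU : IsOpen U)
    (K : Set (Fin n → ℝ)) (hK : IsCompact K) (hKU : K ⊆ U)
    (φ : (Fin n → ℝ) × (Fin N → ℝ) → ℝ)
    (hφ : ContDiffOn ℝ 1 φ (U ×ˢ {θ : Fin N → ℝ | θ ≠ 0}))
    (hhom : ∀ x ∈ U, ∀ θ : Fin N → ℝ, θ ≠ 0 → ∀ lam : ℝ, 0 < lam →
      φ (x, lam • θ) = lam * φ (x, θ))
    (hd : ∀ x ∈ K, ∀ θ : Fin N → ℝ, θ ≠ 0 →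
      (∃ i : Fin n, pdx i φ (x, θ) ≠ 0) ∨ (∃ j : Fin N, pdy j φ (x, θ) ≠ 0))
    (A : Set (Fin N → ℝ)) (V : Set (Fin n → ℝ))
    (hA0 : ∀ θ ∈ A, θ ≠ 0)
    (hAcone : ∀ θ ∈ A, ∀ lam : ℝ, 0 < lam → lam • θ ∈ A)
    (hAclosed : ∀ θ : Fin N → ℝ, θ ≠ 0 → θ ∈ closure A → θ ∈ A)
    (hV0 : ∀ ξ ∈ V, ξ ≠ 0)
    (hVcone : ∀ ξ ∈ V, ∀ lam : ℝ, 0 < lam → lam • ξ ∈ V)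
    (hVclosed : ∀ ξ : Fin n → ℝ, ξ ≠ 0 → ξ ∈ closure V → ξ ∈ V)
    (hnc : ∀ x ∈ K, ∀ θ ∈ A, (∀ j : Fin N, pdy j φ (x, θ) = 0) →
      (fun i : Fin n => pdx i φ (x, θ)) ∉ V) :
    ∃ c > 0, ∀ x ∈ K, ∀ θ ∈ A, ∀ ξ ∈ V,
      ‖(fun i : Fin n => pdx i φ (x, θ)) - ξ‖ +
          ‖θ‖ * ‖fun j : Fin N => pdy j φ (x, θ)‖ ≥
        c * (‖θ‖ + ‖ξ‖) :=
  homogeneous_noncharacteristic_lower_bound_general n N U hU K hK hKU φ hφ hhom hd A V hA0 hAcone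
    hAclosed hVcone hVclosed hnc
end
end

section
/- (Gevrey Borel lemma for symbol classes S^{m'}_s, Proposition A.2.1, version (A.2.2)) Let s > 1, n ≥ 1, m' ∈ ℝ, C > 0, and for each j ≥ 0 and h ∈ (0,1] let a_j(·,·;h) : ℝ^n × ℝ^n → ℂ be smooth with |∂_x^α ∂_ξ^β a_j(x,ξ;h)| ≤ C^{1+|α|+|β|+j} (α!)^s (β!)^s (j!)^s h^{−m'+j} for all multi-indices α, β, all (x,ξ) and all h. Then there exist C' > 0 and, for each h ∈ (0,1], a smooth function a(·,·;h) : ℝ^n × ℝ^n → ℂ, such that for every N ≥ 1, all multi-indices α, β, all (x,ξ) and all h ∈ (0,1]: |∂_x^α ∂_ξ^β ( a(x,ξ;h) − Σ_{j<N} a_j(x,ξ;h) )| ≤ C'^{1+|α|+|β|+N} (α!)^s (β!)^s (N!)^s h^{−m'+N}. -/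
open scoped BigOperators Real
open MeasureTheory

noncomputable section

variable {n m : ℕ} {E : Type*} [NormedAddCommGroup E] [NormedSpace ℝ E]

/-!
The realization is the truncated sum `a(h) = ∑_{j ≤ K(h)} a_j(h)` with `K(h) ≈ (2Ch)^{-1/s}`.
After applying `∂_x^α ∂_ξ^β`, the bounds `T_j` of consecutive terms have ratio `T_{j+1}/T_j =
C (j+1)^s h`, which is at most `1/2` exactly up to the cut-off `K(h)`. Hence for `N ≤ K(h)` the
remainder `∑_{N ≤ j ≤ K(h)}` is dominated by a geometric series `≤ 2 T_N`, while for `N > K(h)`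
the missing terms `T_j`, `K(h) < j < N`, are each at most `2^{N-j} T_N`.
-/

open Finset
open scoped ContDiff Nat

section SmoothAdditive

variable {F : Type*} [NormedAddCommGroup F] [NormedSpace ℝ F]

structure IsSmoothAdditive (D : (F → E) → (F → E)) : Prop where
  contDiff {f : F → E} : ContDiff ℝ ∞ f → ContDiff ℝ ∞ (D f)
  map_sub {f g : F → E} : ContDiff ℝ ∞ f → ContDiff ℝ ∞ g → D (f - g) = D f - D g

namespace IsSmoothAdditive

variable {D D' : (F → E) → (F → E)}

theorem id : IsSmoothAdditive (fun f : F → E => f) :=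
  ⟨fun hf => hf, fun _ _ => rfl⟩

theorem comp (hD : IsSmoothAdditive D) (hD' : IsSmoothAdditive D') :
    IsSmoothAdditive (fun f => D (D' f)) :=
  ⟨fun hf => hD.contDiff (hD'.contDiff hf), fun hf hg => by
    rw [hD'.map_sub hf hg, hD.map_sub (hD'.contDiff hf) (hD'.contDiff hg)]⟩

theorem iterate (hD : IsSmoothAdditive D) : ∀ k : ℕ, IsSmoothAdditive D^[k]
  | 0 => id
  | k + 1 => by rw [Function.iterate_succ']; exact hD.comp (hD.iterate k)

theorem map_zero (hD : IsSmoothAdditive D) : D 0 = 0 := by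
  simpa using hD.map_sub (f := 0) (g := 0) contDiff_const contDiff_const

theorem map_add (hD : IsSmoothAdditive D) {f g : F → E} (hf : ContDiff ℝ ∞ f)
    (hg : ContDiff ℝ ∞ g) : D (f + g) = D f + D g := by
  have h0 : ContDiff ℝ ∞ (0 : F → E) := contDiff_const
  have h0g : ContDiff ℝ ∞ (0 - g) := h0.sub hg
  calc D (f + g) = D (f - (0 - g)) := by rw [zero_sub, sub_neg_eq_add]
    _ = D f - (D 0 - D g) := by rw [hD.map_sub hf h0g, hD.map_sub h0 hg]
    _ = D f + D g := by rw [hD.map_zero, zero_sub, sub_neg_eq_add]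

theorem map_sum (hD : IsSmoothAdditive D) {ι : Type*} (s : Finset ι) {f : ι → F → E}
    (hf : ∀ i ∈ s, ContDiff ℝ ∞ (f i)) : D (∑ i ∈ s, f i) = ∑ i ∈ s, D (f i) := by
  induction s using Finset.cons_induction with
  | empty => simpa using hD.map_zero
  | cons i s hi ih =>
    rw [forall_mem_cons] at hf
    have hsum : ContDiff ℝ ∞ (∑ i ∈ s, f i) := by rw [sum_fn]; exact ContDiff.sum hf.2
    rw [sum_cons, sum_cons, hD.map_add hf.1 hsum, ih hf.2]

theorem map_sum_sub_sum (hD : IsSmoothAdditive D) {ι : Type*} {f : ι → F → E}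
    (hf : ∀ i, ContDiff ℝ ∞ (f i)) (s t : Finset ι) :
    D (fun x => ∑ i ∈ s, f i x - ∑ i ∈ t, f i x) =
      fun x => ∑ i ∈ s, D (f i) x - ∑ i ∈ t, D (f i) x := by
  have hsum (u : Finset ι) : ContDiff ℝ ∞ (∑ i ∈ u, f i) := by
    rw [sum_fn]; exact ContDiff.sum fun i _ => hf i
  calc D (fun x => ∑ i ∈ s, f i x - ∑ i ∈ t, f i x) = D (∑ i ∈ s, f i - ∑ i ∈ t, f i) := by
        simp only [← Finset.sum_apply, Pi.sub_def]
    _ = ∑ i ∈ s, D (f i) - ∑ i ∈ t, D (f i) := by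
        rw [hD.map_sub (hsum s) (hsum t), hD.map_sum s fun i _ => hf i,
          hD.map_sum t fun i _ => hf i]
    _ = fun x => ∑ i ∈ s, D (f i) x - ∑ i ∈ t, D (f i) x := by
        simp only [← Finset.sum_apply, Pi.sub_def]

theorem foldr {ι : Type*} {G : ι → (F → E) → (F → E)} (hG : ∀ i, IsSmoothAdditive (G i))
    (l : List ι) : IsSmoothAdditive (fun f => l.foldr G f) := by
  induction l with
  | nil => exact id
  | cons i l ih => exact (hG i).comp ih

end IsSmoothAdditive

theorem isSmoothAdditive_fderiv_apply (v : F) :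
    IsSmoothAdditive (fun (f : F → E) x => fderiv ℝ f x v) where
  contDiff hf := (hf.fderiv_right le_rfl).clm_apply contDiff_const
  map_sub hf hg := by
    ext x
    rw [fderiv_sub (hf.differentiable (by simp)).differentiableAt
      (hg.differentiable (by simp)).differentiableAt]
    rfl

theorem isSmoothAdditive_mdx (α : Fin n → ℕ) : IsSmoothAdditive (mdx (m := m) (E := E) α) :=
  IsSmoothAdditive.foldr (fun i => (isSmoothAdditive_fderiv_apply _).iterate (α i)) _

theorem isSmoothAdditive_mdy (β : Fin m → ℕ) : IsSmoothAdditive (mdy (n := n) (E := E) β) :=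
  IsSmoothAdditive.foldr (fun j => (isSmoothAdditive_fderiv_apply _).iterate (β j)) _

end SmoothAdditive

section TruncatedSums

variable {G : Type*} [SeminormedAddCommGroup G] {u : ℕ → G} {T : ℕ → ℝ}

theorem norm_sum_Ico_le_of_halving (hu : ∀ j, ‖u j‖ ≤ T j) {N K : ℕ}
    (hT : ∀ j, N ≤ j → j < K → T (j + 1) ≤ 2⁻¹ * T j) :
    ‖∑ j ∈ Ico N (K + 1), u j‖ ≤ 2 * T N := by
  have hgeom (i : ℕ) (hi : N + i ≤ K) : T (N + i) ≤ 2⁻¹ ^ i * T N :=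
    le_geom (u := fun k => T (N + k)) (c := 2⁻¹) (by norm_num) i fun k hk =>
      hT (N + k) (by omega) (by omega)
  calc ‖∑ j ∈ Ico N (K + 1), u j‖ ≤ ∑ j ∈ Ico N (K + 1), T j := norm_sum_le_of_le _ fun j _ => hu j
    _ = ∑ i ∈ range (K + 1 - N), T (N + i) := sum_Ico_eq_sum_range _ _ _
    _ ≤ ∑ i ∈ range (K + 1 - N), (1 / 2 : ℝ) ^ i * T N :=
        sum_le_sum fun i hi => by simpa using hgeom i (by rw [mem_range] at hi; omega)
    _ = (∑ i ∈ range (K + 1 - N), (1 / 2 : ℝ) ^ i) * T N := by rw [sum_mul]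
    _ ≤ 2 * T N :=
        mul_le_mul_of_nonneg_right (sum_geometric_two_le _) ((norm_nonneg _).trans (hu N))

theorem norm_sum_Ico_le_of_doubling (hu : ∀ j, ‖u j‖ ≤ T j) {K N : ℕ}
    (hT : ∀ j, K < j → j < N → T j ≤ 2 * T (j + 1)) :
    ‖∑ j ∈ Ico (K + 1) N, u j‖ ≤ 4 ^ N * T N := by
  have hTN : 0 ≤ T N := (norm_nonneg _).trans (hu N)
  have hgeom (j : ℕ) (hj : j ∈ Ico (K + 1) N) : T j ≤ 2 ^ N * T N := by
    rw [mem_Ico] at hj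
    have := le_geom (u := fun k => T (N - k)) (c := 2) zero_le_two (N - j) fun k hk => by
      have := hT (N - (k + 1)) (by omega) (by omega)
      rwa [show N - (k + 1) + 1 = N - k by omega] at this
    simp only [Nat.sub_sub_self hj.2.le, Nat.sub_zero] at this
    exact this.trans (mul_le_mul_of_nonneg_right (pow_le_pow_right₀ one_le_two (by omega)) hTN)
  calc ‖∑ j ∈ Ico (K + 1) N, u j‖ ≤ ∑ j ∈ Ico (K + 1) N, T j := norm_sum_le_of_le _ fun j _ => hu j
    _ ≤ ∑ j ∈ Ico (K + 1) N, 2 ^ N * T N := sum_le_sum hgeom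
    _ = (N - (K + 1) : ℕ) * (2 ^ N * T N) := by rw [sum_const, Nat.card_Ico, nsmul_eq_mul]
    _ ≤ 2 ^ N * (2 ^ N * T N) := by
        gcongr
        exact_mod_cast (N.sub_le _).trans N.lt_two_pow_self.le
    _ = 4 ^ N * T N := by rw [← mul_assoc, ← mul_pow]; norm_num

theorem norm_sum_range_sub_sum_range_le (hu : ∀ j, ‖u j‖ ≤ T j) (K N : ℕ)
    (hhalf : ∀ j < K, T (j + 1) ≤ 2⁻¹ * T j) (hdouble : ∀ j, K < j → T j ≤ 2 * T (j + 1)) :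
    ‖∑ j ∈ range (K + 1), u j - ∑ j ∈ range N, u j‖ ≤ 2 * 4 ^ N * T N := by
  have hTN : 0 ≤ T N := (norm_nonneg _).trans (hu N)
  have h4N : (1 : ℝ) ≤ 4 ^ N := one_le_pow₀ (by norm_num)
  rcases le_total N (K + 1) with hNK | hKN
  · rw [← sum_Ico_eq_sub _ hNK]
    refine (norm_sum_Ico_le_of_halving hu fun j _ hj => hhalf j hj).trans ?_
    nlinarith
  · rw [← norm_neg, neg_sub, ← sum_Ico_eq_sub _ hKN]
    refine (norm_sum_Ico_le_of_doubling hu fun j hj _ => hdouble j hj).trans ?_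
    nlinarith

end TruncatedSums

section GevreyTerms

variable {s m' C h : ℝ}

def gevreyTerm (s m' C h : ℝ) (j : ℕ) : ℝ := C ^ j * (j ! : ℝ) ^ s * h ^ (-m' + j)

/-- The largest `k` with `C k^s h ≤ 1/2`, i.e. where the ratio `C (j+1)^s h` of consecutive
Gevrey terms crosses `1/2`. -/
def borelCutoff (s C h : ℝ) : ℕ := ⌊(2 * C * h)⁻¹ ^ s⁻¹⌋₊

theorem gevreyTerm_nonneg (hC : 0 ≤ C) (hh : 0 ≤ h) (j : ℕ) : 0 ≤ gevreyTerm s m' C h j := by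
  unfold gevreyTerm; positivity

theorem gevreyTerm_succ (hh : 0 < h) (j : ℕ) :
    gevreyTerm s m' C h (j + 1) = C * ((j + 1 : ℕ) : ℝ) ^ s * h * gevreyTerm s m' C h j := by
  simp only [gevreyTerm, Nat.factorial_succ, Nat.cast_mul]
  rw [Real.mul_rpow (by positivity) (by positivity), Nat.cast_succ,
    show -m' + ((j : ℝ) + 1) = (-m' + j) + 1 by ring, Real.rpow_add hh, Real.rpow_one]
  ring

theorem le_borelCutoff_iff (hs : 0 < s) (hC : 0 < C) (hh : 0 < h) {k : ℕ} :
    k ≤ borelCutoff s C h ↔ C * (k : ℝ) ^ s * h ≤ 2⁻¹ := by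
  rw [borelCutoff, Nat.le_floor_iff (by positivity),
    Real.le_rpow_inv_iff_of_pos (Nat.cast_nonneg k) (by positivity) hs, ← one_div,
    le_div_iff₀ (by positivity)]
  constructor <;> intro <;> linarith

theorem gevreyTerm_succ_le_of_lt_borelCutoff (hs : 0 < s) (hC : 0 < C) (hh : 0 < h) {j : ℕ}
    (hj : j < borelCutoff s C h) :
    gevreyTerm s m' C h (j + 1) ≤ 2⁻¹ * gevreyTerm s m' C h j := by
  rw [gevreyTerm_succ hh]
  exact mul_le_mul_of_nonneg_right ((le_borelCutoff_iff hs hC hh).1 hj)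
    (gevreyTerm_nonneg hC.le hh.le j)

theorem gevreyTerm_le_of_borelCutoff_lt (hs : 0 < s) (hC : 0 < C) (hh : 0 < h) {j : ℕ}
    (hj : borelCutoff s C h < j) :
    gevreyTerm s m' C h j ≤ 2 * gevreyTerm s m' C h (j + 1) := by
  have hratio : 2⁻¹ < C * ((j + 1 : ℕ) : ℝ) ^ s * h :=
    lt_of_not_ge fun hle => by have := (le_borelCutoff_iff hs hC hh).2 hle; omega
  rw [gevreyTerm_succ hh]
  nlinarith [gevreyTerm_nonneg (s := s) (m' := m') hC.le hh.le j]

theorem norm_sum_borelCutoff_sub_le {G : Type*} [SeminormedAddCommGroup G] {u : ℕ → G} {c : ℝ}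
    (hs : 0 < s) (hC : 0 < C) (hh : 0 < h) (hc : 0 ≤ c)
    (hu : ∀ j, ‖u j‖ ≤ c * gevreyTerm s m' C h j) (N : ℕ) :
    ‖∑ j ∈ range (borelCutoff s C h + 1), u j - ∑ j ∈ range N, u j‖ ≤
      2 * 4 ^ N * (c * gevreyTerm s m' C h N) :=
  norm_sum_range_sub_sum_range_le hu _ N
    (fun j hj => by
      rw [mul_left_comm]
      exact mul_le_mul_of_nonneg_left (gevreyTerm_succ_le_of_lt_borelCutoff hs hC hh hj) hc)
    (fun j hj => by
      rw [mul_left_comm]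
      exact mul_le_mul_of_nonneg_left (gevreyTerm_le_of_borelCutoff_lt hs hC hh hj) hc)

end GevreyTerms

theorem two_mul_four_pow_mul_pow_le {C : ℝ} (hC : 0 ≤ C) {N M : ℕ} (hNM : N < M) :
    2 * 4 ^ N * C ^ M ≤ (8 * C) ^ M := by
  rw [mul_pow]
  gcongr
  calc (2 : ℝ) * 4 ^ N ≤ 8 * 8 ^ N := by gcongr <;> norm_num
    _ = 8 ^ (N + 1) := (pow_succ' _ _).symm
    _ ≤ 8 ^ M := pow_le_pow_right₀ (by norm_num) hNM

theorem gevrey_borel_symbols_general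
    (s : ℝ) (hs : 1 < s) (n : ℕ) (m' C : ℝ) (hC : 0 < C)
    (aj : ℕ → ℝ → (Fin n → ℝ) × (Fin n → ℝ) → ℂ)
    (haj : ∀ j : ℕ, ∀ h ∈ Set.Ioc (0:ℝ) 1, ContDiff ℝ (⊤ : ℕ∞) (aj j h))
    (hajG : ∀ j : ℕ, ∀ h ∈ Set.Ioc (0:ℝ) 1, ∀ (α β : Fin n → ℕ) p,
      ‖mdx α (mdy β (aj j h)) p‖ ≤
        C ^ (1 + msize α + msize β + j) * ((mfact α : ℕ) : ℝ) ^ s * ((mfact β : ℕ) : ℝ) ^ s *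
          ((j.factorial : ℝ)) ^ s * h ^ (-m' + (j : ℝ))) :
    ∃ C' > 0, ∃ a : ℝ → (Fin n → ℝ) × (Fin n → ℝ) → ℂ,
      (∀ h ∈ Set.Ioc (0:ℝ) 1, ContDiff ℝ (⊤ : ℕ∞) (a h)) ∧
      ∀ N : ℕ, 1 ≤ N → ∀ (α β : Fin n → ℕ) (p : (Fin n → ℝ) × (Fin n → ℝ)),
        ∀ h ∈ Set.Ioc (0:ℝ) 1,
        ‖mdx α (mdy β (fun q => a h q - ∑ j ∈ Finset.range N, aj j h q)) p‖ ≤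
          C' ^ (1 + msize α + msize β + N) * ((mfact α : ℕ) : ℝ) ^ s *
            ((mfact β : ℕ) : ℝ) ^ s * ((N.factorial : ℝ)) ^ s * h ^ (-m' + (N : ℝ)) := by
  refine ⟨8 * C, by positivity, fun h q => ∑ j ∈ range (borelCutoff s C h + 1), aj j h q,
    fun h hh => ContDiff.sum fun j _ => haj j h hh, fun N _ α β p h hh => ?_⟩
  have hD : IsSmoothAdditive (fun f : _ → ℂ => mdx α (mdy β f)) :=
    (isSmoothAdditive_mdx α).comp (isSmoothAdditive_mdy β)
  have hh0 : 0 < h := hh.1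
  set c := C ^ (1 + msize α + msize β) * (mfact α : ℝ) ^ s * (mfact β : ℝ) ^ s
  have hbound (j : ℕ) : C ^ (1 + msize α + msize β + j) * (mfact α : ℝ) ^ s *
      (mfact β : ℝ) ^ s * (j ! : ℝ) ^ s * h ^ (-m' + (j : ℝ)) = c * gevreyTerm s m' C h j := by
    rw [gevreyTerm, pow_add]; ring
  have hremainder := congrFun (hD.map_sum_sub_sum (fun j => haj j h hh)
    (range (borelCutoff s C h + 1)) (range N)) p
  beta_reduce at hremainder ⊢
  rw [hremainder]
  calc _ ≤ 2 * 4 ^ N * (c * gevreyTerm s m' C h N) :=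
        norm_sum_borelCutoff_sub_le (by linarith) hC hh0 (by positivity)
          (fun j => (hajG j h hh α β p).trans_eq (hbound j)) N
    _ = 2 * 4 ^ N * C ^ (1 + msize α + msize β + N) * ((mfact α : ℝ) ^ s * (mfact β : ℝ) ^ s *
          (N ! : ℝ) ^ s * h ^ (-m' + (N : ℝ))) := by rw [← hbound]; ring
    _ ≤ (8 * C) ^ (1 + msize α + msize β + N) * ((mfact α : ℝ) ^ s * (mfact β : ℝ) ^ s *
          (N ! : ℝ) ^ s * h ^ (-m' + (N : ℝ))) := by
        gcongr
        exact two_mul_four_pow_mul_pow_le hC.le (by omega)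
    _ = _ := by ring

/-- **Gevrey Borel lemma for symbol classes `S^{m'}_s`** (Proposition A.2.1, version (A.2.2)):
a formal Gevrey symbol `(a_j)` can be realized by a single symbol `a` with remainders at the
Gevrey scale `(N!)^s h^{−m'+N}`. -/
theorem gevrey_borel_symbols
    (s : ℝ) (hs : 1 < s) (n : ℕ) (hn : 1 ≤ n) (m' C : ℝ) (hC : 0 < C)
    (aj : ℕ → ℝ → (Fin n → ℝ) × (Fin n → ℝ) → ℂ)
    (haj : ∀ j : ℕ, ∀ h ∈ Set.Ioc (0:ℝ) 1, ContDiff ℝ (⊤ : ℕ∞) (aj j h))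
    (hajG : ∀ j : ℕ, ∀ h ∈ Set.Ioc (0:ℝ) 1, ∀ (α β : Fin n → ℕ) p,
      ‖mdx α (mdy β (aj j h)) p‖ ≤
        C ^ (1 + msize α + msize β + j) * ((mfact α : ℕ) : ℝ) ^ s * ((mfact β : ℕ) : ℝ) ^ s *
          ((j.factorial : ℝ)) ^ s * h ^ (-m' + (j : ℝ))) :
    ∃ C' > 0, ∃ a : ℝ → (Fin n → ℝ) × (Fin n → ℝ) → ℂ,
      (∀ h ∈ Set.Ioc (0:ℝ) 1, ContDiff ℝ (⊤ : ℕ∞) (a h)) ∧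
      ∀ N : ℕ, 1 ≤ N → ∀ (α β : Fin n → ℕ) (p : (Fin n → ℝ) × (Fin n → ℝ)),
        ∀ h ∈ Set.Ioc (0:ℝ) 1,
        ‖mdx α (mdy β (fun q => a h q - ∑ j ∈ Finset.range N, aj j h q)) p‖ ≤
          C' ^ (1 + msize α + msize β + N) * ((mfact α : ℕ) : ℝ) ^ s *
            ((mfact β : ℕ) : ℝ) ^ s * ((N.factorial : ℝ)) ^ s * h ^ (-m' + (N : ℝ)) :=
  gevrey_borel_symbols_general s hs n m' C hC aj haj hajG
end
end

section
/- (Gevrey dyadic partition of unity, equations (2.21) and (A.2.7)) Let s > 1 and n ≥ 1. Then there exist C > 0 and smooth compactly supported functions χ₀ : ℝ^n → ℝ and χ : ℝ^n → ℝ, with supp χ contained in a compact annulus {r₁ ≤ |ξ| ≤ r₂} with 0 < r₁ < r₂ (in particular 0 ∉ supp χ), such that both χ₀ and χ are Gevrey of order s with constant C (|∂^α χ₀|, |∂^α χ| ≤ C^{1+|α|}(α!)^s for all α), and χ₀(ξ) + Σ_{ν=1}^∞ χ(2^{−ν} ξ) = 1 for every ξ ∈ ℝ^n, the sum being locally finite.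 -/
open scoped BigOperators Real
open MeasureTheory

noncomputable section

variable {n m : ℕ} {E : Type*} [NormedAddCommGroup E] [NormedSpace ℝ E]

/-!
The one-dimensional cutoff is Hörmander's infinite convolution: a trapezoid is averaged
successively over intervals of half-lengths `ℓ_j = (j + 1)^(-s) / c`. Differentiating the average
`A_l f(x) = (2l)⁻¹ ∫_{x-l}^{x+l} f` gives the difference quotient `(f(x + l) - f(x - l)) / (2l)`,
of size at most `sup |f| / l`. So when the `k`-th derivative falls on the first `k` averages it is
bounded by `∏_{j<k} ℓ_j⁻¹ = c^k (k!)^s`, whereas the remaining averages only spread the support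
and the plateau by `∑ ℓ_j`, which is finite because `s > 1`. Products of this function over the
coordinates give `χ₀`, and with `χ(ξ) = χ₀(ξ) - χ₀(2ξ)` the dyadic sum telescopes.
-/

namespace GevreyPartition

open Filter

def avg (l : ℝ) (f : ℝ → ℝ) (x : ℝ) : ℝ := (2 * l)⁻¹ * ∫ t in (x - l)..(x + l), f t

def diffQuot (l : ℝ) (f : ℝ → ℝ) (x : ℝ) : ℝ := (2 * l)⁻¹ * (f (x + l) - f (x - l))

section Averaging

variable {l c M : ℝ} {f f' : ℝ → ℝ}

theorem hasDerivAt_avg (hf : Continuous f) (x : ℝ) :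
    HasDerivAt (avg l f) (diffQuot l f x) x := by
  have hprim (a : ℝ) : HasDerivAt (fun y => ∫ t in (0 : ℝ)..(y + a), f t) (f (x + a)) x := by
    simpa [Function.comp_def] using (hf.integral_hasStrictDerivAt 0 (x + a)).hasDerivAt.comp x
      ((hasDerivAt_id x).add_const a)
  have hsplit : avg l f = fun y => (2 * l)⁻¹ *
      ((∫ t in (0 : ℝ)..(y + l), f t) - ∫ t in (0 : ℝ)..(y + -l), f t) := by
    funext y
    rw [avg, ← sub_eq_add_neg, intervalIntegral.integral_interval_sub_left
      (hf.intervalIntegrable _ _) (hf.intervalIntegrable _ _)]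
  rw [hsplit]
  simpa [diffQuot, ← sub_eq_add_neg] using ((hprim l).sub (hprim (-l))).const_mul (2 * l)⁻¹

theorem continuous_avg (hf : Continuous f) : Continuous (avg l f) :=
  continuous_iff_continuousAt.2 fun x => (hasDerivAt_avg hf x).continuousAt

theorem continuous_diffQuot (hf : Continuous f) : Continuous (diffQuot l f) := by
  unfold diffQuot
  fun_prop

theorem hasDerivAt_avg_of_hasDerivAt (hf : ∀ x, HasDerivAt f (f' x) x) (hf' : Continuous f')
    (x : ℝ) : HasDerivAt (avg l f) (avg l f' x) x := by
  have hcont : Continuous f := continuous_iff_continuousAt.2 fun x => (hf x).continuousAt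
  have hFTC : diffQuot l f x = avg l f' x := by
    rw [diffQuot, avg, intervalIntegral.integral_eq_sub_of_hasDerivAt (fun t _ => hf t)
      (hf'.intervalIntegrable _ _)]
  exact hFTC ▸ hasDerivAt_avg hcont x

theorem abs_avg_sub_le (hl : 0 < l) (hf : Continuous f) {x : ℝ}
    (hM : ∀ t, |t - x| ≤ l → |f t - c| ≤ M) : |avg l f x - c| ≤ M := by
  have hrepr : avg l f x - c = (2 * l)⁻¹ * ∫ t in (x - l)..(x + l), (f t - c) := by
    rw [intervalIntegral.integral_sub (hf.intervalIntegrable _ _) intervalIntegrable_const,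
      intervalIntegral.integral_const, avg, smul_eq_mul]
    field_simp
    ring
  have hint : ‖∫ t in (x - l)..(x + l), (f t - c)‖ ≤ M * |x + l - (x - l)| :=
    intervalIntegral.norm_integral_le_of_norm_le_const fun t ht => by
      rw [Set.uIoc_of_le (by linarith)] at ht
      exact hM t (abs_le.2 ⟨by linarith [ht.1], by linarith [ht.2]⟩)
  rw [show x + l - (x - l) = 2 * l by ring, abs_of_pos (by positivity)] at hint
  rw [hrepr, abs_mul, abs_inv, abs_of_pos (by positivity : 0 < 2 * l), ← Real.norm_eq_abs]
  calc (2 * l)⁻¹ * ‖∫ t in (x - l)..(x + l), (f t - c)‖ ≤ (2 * l)⁻¹ * (M * (2 * l)) := by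
        gcongr
    _ = M := by field_simp

theorem abs_avg_le (hl : 0 < l) (hf : Continuous f) (hM : ∀ t, |f t| ≤ M) (x : ℝ) :
    |avg l f x| ≤ M := by
  simpa using abs_avg_sub_le (c := 0) hl hf fun t _ => by simpa using hM t

theorem avg_eq_of_forall_eq (hl : 0 < l) (hf : Continuous f) {x : ℝ}
    (h : ∀ t, |t - x| ≤ l → f t = c) : avg l f x = c :=
  sub_eq_zero.1 <| abs_nonpos_iff.1 <| abs_avg_sub_le hl hf fun t ht => by simp [h t ht]

theorem abs_avg_sub_self_le (hl : 0 < l) (hf : ∀ x, HasDerivAt f (f' x) x)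
    (hf' : ∀ x, |f' x| ≤ M) (x : ℝ) : |avg l f x - f x| ≤ l * M := by
  have hcont : Continuous f := continuous_iff_continuousAt.2 fun x => (hf x).continuousAt
  refine abs_avg_sub_le hl hcont fun t ht => ?_
  have hMVT := Convex.norm_image_sub_le_of_norm_hasDerivWithin_le
    (fun y _ => (hf y).hasDerivWithinAt) (fun y _ => hf' y) convex_univ
    (Set.mem_univ x) (Set.mem_univ t)
  calc |f t - f x| ≤ M * |t - x| := by simpa [Real.norm_eq_abs] using hMVT
    _ ≤ l * M := by nlinarith [abs_nonneg (f' 0), hf' 0]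

theorem abs_diffQuot_le (hl : 0 < l) (hM : ∀ t, |f t| ≤ M) (x : ℝ) :
    |diffQuot l f x| ≤ l⁻¹ * M := by
  rw [diffQuot, abs_mul, abs_inv, abs_of_pos (by positivity : 0 < 2 * l)]
  calc (2 * l)⁻¹ * |f (x + l) - f (x - l)| ≤ (2 * l)⁻¹ * (M + M) := by
        gcongr
        exact (abs_sub _ _).trans (add_le_add (hM _) (hM _))
    _ = l⁻¹ * M := by field_simp; ring

end Averaging

def IsDerivTower (ψ : ℕ → ℝ → ℝ) : Prop := ∀ k x, HasDerivAt (ψ k) (ψ (k + 1) x) x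

namespace IsDerivTower

variable {ψ : ℕ → ℝ → ℝ}

open scoped ContDiff in
theorem contDiff (h : IsDerivTower ψ) (k : ℕ) : ContDiff ℝ ∞ (ψ k) := by
  have hderiv (k : ℕ) : deriv (ψ k) = ψ (k + 1) := funext fun x => (h k x).deriv
  rw [contDiff_infty]
  intro N
  induction N generalizing k with
  | zero => exact contDiff_zero.2 (continuous_iff_continuousAt.2 fun x => (h k x).continuousAt)
  | succ N ih =>
    rw [Nat.cast_succ, contDiff_succ_iff_deriv, hderiv]
    exact ⟨fun x => (h k x).differentiableAt, by simp, ih (k + 1)⟩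

theorem rescale (h : IsDerivTower ψ) (c : ℝ) : IsDerivTower fun k x => c ^ k * ψ k (c * x) := by
  intro k x
  have := ((h k (c * x)).comp x ((hasDerivAt_id x).const_mul c)).const_mul (c ^ k)
  simpa [pow_succ, mul_comm, mul_left_comm, mul_assoc] using this

end IsDerivTower

theorem abs_rescale_le {ψ : ℕ → ℝ → ℝ} {c e s : ℝ} (hc : 0 ≤ c)
    (hψ : ∀ k x, |ψ k x| ≤ e ^ k * (k.factorial : ℝ) ^ s) (k : ℕ) (x : ℝ) :
    |c ^ k * ψ k (c * x)| ≤ (c * e) ^ k * (k.factorial : ℝ) ^ s := by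
  rw [abs_mul, abs_pow, abs_of_nonneg hc, mul_pow, mul_assoc]
  gcongr
  exact hψ k _

theorem tendstoUniformly_of_norm_succ_sub_le {α F : Type*} [NormedAddCommGroup F]
    [CompleteSpace F] {u : ℕ → α → F} {a : ℕ → ℝ}
    (ha : Summable a) (h : ∀ j x, ‖u (j + 1) x - u j x‖ ≤ a j) :
    TendstoUniformly u (fun x => u 0 x + ∑' j, (u (j + 1) x - u j x)) atTop := by
  have hsum := tendstoUniformly_tsum_nat ha h
  rw [Metric.tendstoUniformly_iff] at hsum ⊢
  intro δ hδ
  filter_upwards [hsum δ hδ] with N hN x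
  have htelescope : u N x = u 0 x + ∑ j ∈ Finset.range N, (u (j + 1) x - u j x) := by
    rw [Finset.sum_range_sub (fun j => u j x), add_sub_cancel]
  rw [htelescope, dist_add_left]
  exact hN x

/-- The margins of `1 / 4` absorb the total averaging length `∑ ℓ_j ≤ 1 / 4`: the smoothed
function is still `1` on `[-1, 1]` and vanishes outside `[-2, 2]`. -/
def trapezoid (x : ℝ) : ℝ := max 0 (min 1 (7 / 2 - 2 * |x|))

theorem continuous_trapezoid : Continuous trapezoid := by
  unfold trapezoid
  fun_prop

theorem abs_trapezoid_le_one (x : ℝ) : |trapezoid x| ≤ 1 := by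
  rw [trapezoid, abs_of_nonneg (le_max_left _ _)]
  exact max_le zero_le_one (min_le_left _ _)

theorem trapezoid_eq_one {x : ℝ} (hx : |x| ≤ 5 / 4) : trapezoid x = 1 := by
  rw [trapezoid, min_eq_left (by linarith), max_eq_right zero_le_one]

theorem trapezoid_eq_zero {x : ℝ} (hx : 7 / 4 ≤ |x|) : trapezoid x = 0 :=
  max_eq_left ((min_le_right _ _).trans (by linarith))

section Plateau

variable (ℓ : ℕ → ℝ)

def diffStage : ℕ → ℝ → ℝ
  | 0 => trapezoid
  | k + 1 => diffQuot (ℓ k) (diffStage k)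

/-- The `k`-th derivative of `A_{ℓ (k + j - 1)} ⋯ A_{ℓ 0} trapezoid`, where `A_l = avg l`:
since `(avg l g)' = diffQuot l g`, the `k` derivatives turn the first `k` averages into
difference quotients. -/
def stage (k : ℕ) : ℕ → ℝ → ℝ
  | 0 => diffStage ℓ k
  | j + 1 => avg (ℓ (k + j)) (stage k j)

def derivBound (k : ℕ) : ℝ := ∏ j ∈ Finset.range k, (ℓ j)⁻¹

def plateau (k : ℕ) (x : ℝ) : ℝ :=
  stage ℓ k 1 x + ∑' j, (stage ℓ k (j + 2) x - stage ℓ k (j + 1) x)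

variable {ℓ}

theorem continuous_diffStage (k : ℕ) : Continuous (diffStage ℓ k) := by
  induction k with
  | zero => exact continuous_trapezoid
  | succ k ih => exact continuous_diffQuot ih

theorem continuous_stage (k j : ℕ) : Continuous (stage ℓ k j) := by
  induction j with
  | zero => exact continuous_diffStage k
  | succ j ih => exact continuous_avg ih

theorem abs_diffStage_le (hℓ : ∀ j, 0 < ℓ j) (k : ℕ) (x : ℝ) :
    |diffStage ℓ k x| ≤ derivBound ℓ k := by
  induction k generalizing x with
  | zero => simpa [derivBound, diffStage] using abs_trapezoid_le_one x
  | succ k ih =>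
    rw [derivBound, Finset.prod_range_succ, mul_comm]
    exact abs_diffQuot_le (hℓ k) ih x

theorem abs_stage_le (hℓ : ∀ j, 0 < ℓ j) (k j : ℕ) (x : ℝ) :
    |stage ℓ k j x| ≤ derivBound ℓ k := by
  induction j generalizing x with
  | zero => exact abs_diffStage_le hℓ k x
  | succ j ih => exact abs_avg_le (hℓ _) (continuous_stage k j) ih x

theorem hasDerivAt_stage (k j : ℕ) (x : ℝ) :
    HasDerivAt (stage ℓ k (j + 1)) (stage ℓ (k + 1) j x) x := by
  induction j generalizing x with
  | zero => exact hasDerivAt_avg (continuous_diffStage k) x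
  | succ j ih =>
    show HasDerivAt (avg (ℓ (k + j + 1)) (stage ℓ k (j + 1)))
      (avg (ℓ (k + 1 + j)) (stage ℓ (k + 1) j) x) x
    rw [Nat.add_right_comm]
    exact hasDerivAt_avg_of_hasDerivAt ih (continuous_stage _ _) x

theorem abs_stage_succ_sub_le (hℓ : ∀ j, 0 < ℓ j) (k j : ℕ) (x : ℝ) :
    |stage ℓ k (j + 2) x - stage ℓ k (j + 1) x| ≤ ℓ (k + 1 + j) * derivBound ℓ (k + 1) := by
  rw [show k + 1 + j = k + (j + 1) by omega]
  exact abs_avg_sub_self_le (hℓ _) (hasDerivAt_stage k j) (abs_stage_le hℓ (k + 1) j) x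

theorem tendstoUniformly_stage (hℓ : ∀ j, 0 < ℓ j) (hsum : Summable ℓ) (k : ℕ) :
    TendstoUniformly (fun J => stage ℓ k (J + 1)) (plateau ℓ k) atTop :=
  tendstoUniformly_of_norm_succ_sub_le (((summable_nat_add_iff (k + 1)).2 hsum).mul_right _)
    fun j x => by rw [Real.norm_eq_abs, Nat.add_comm j (k + 1)]; exact abs_stage_succ_sub_le hℓ k j x

theorem isDerivTower_plateau (hℓ : ∀ j, 0 < ℓ j) (hsum : Summable ℓ) :
    IsDerivTower (plateau ℓ) := fun k x =>
  hasDerivAt_of_tendstoUniformly (tendstoUniformly_stage hℓ hsum (k + 1))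
    (Eventually.of_forall fun J => hasDerivAt_stage k (J + 1))
    (fun y => ((tendstoUniformly_stage hℓ hsum k).tendsto_at y).comp (tendsto_add_atTop_nat 1)) x

theorem abs_plateau_le (hℓ : ∀ j, 0 < ℓ j) (hsum : Summable ℓ) (k : ℕ) (x : ℝ) :
    |plateau ℓ k x| ≤ derivBound ℓ k :=
  le_of_tendsto ((tendstoUniformly_stage hℓ hsum k).tendsto_at x).abs
    (Eventually.of_forall fun J => abs_stage_le hℓ k (J + 1) x)

theorem plateau_eq_of_forall_stage_eq (hℓ : ∀ j, 0 < ℓ j) (hsum : Summable ℓ) {k : ℕ}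
    {x c : ℝ} (h : ∀ J, stage ℓ k (J + 1) x = c) : plateau ℓ k x = c := by
  have hlim := (tendstoUniformly_stage hℓ hsum k).tendsto_at x
  simp only [h] at hlim
  exact tendsto_nhds_unique hlim tendsto_const_nhds

theorem stage_zero_eq_one (hℓ : ∀ j, 0 < ℓ j) (m : ℕ) {x : ℝ}
    (hx : |x| + ∑ i ∈ Finset.range m, ℓ i ≤ 5 / 4) : stage ℓ 0 m x = 1 := by
  induction m generalizing x with
  | zero => exact trapezoid_eq_one (by simpa using hx)
  | succ m ih =>
    rw [Finset.sum_range_succ] at hx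
    refine avg_eq_of_forall_eq (hℓ _) (continuous_stage 0 m) fun t ht => ih ?_
    have := abs_sub_abs_le_abs_sub t x
    rw [zero_add] at ht
    linarith

theorem stage_zero_eq_zero (hℓ : ∀ j, 0 < ℓ j) (m : ℕ) {x : ℝ}
    (hx : 7 / 4 + ∑ i ∈ Finset.range m, ℓ i < |x|) : stage ℓ 0 m x = 0 := by
  induction m generalizing x with
  | zero => exact trapezoid_eq_zero (by simp at hx; linarith)
  | succ m ih =>
    rw [Finset.sum_range_succ] at hx
    refine avg_eq_of_forall_eq (hℓ _) (continuous_stage 0 m) fun t ht => ih ?_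
    have := abs_sub_abs_le_abs_sub x t
    rw [zero_add, abs_sub_comm] at ht
    linarith

theorem plateau_zero_eq_one (hℓ : ∀ j, 0 < ℓ j) (hsum : Summable ℓ) (hℓ4 : ∑' j, ℓ j ≤ 1 / 4)
    {x : ℝ} (hx : |x| ≤ 1) : plateau ℓ 0 x = 1 :=
  plateau_eq_of_forall_stage_eq hℓ hsum fun J => stage_zero_eq_one hℓ (J + 1) <| by
    linarith [hsum.sum_le_tsum (Finset.range (J + 1)) fun j _ => (hℓ j).le]

theorem plateau_zero_eq_zero (hℓ : ∀ j, 0 < ℓ j) (hsum : Summable ℓ) (hℓ4 : ∑' j, ℓ j ≤ 1 / 4)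
    {x : ℝ} (hx : 2 < |x|) : plateau ℓ 0 x = 0 :=
  plateau_eq_of_forall_stage_eq hℓ hsum fun J => stage_zero_eq_zero hℓ (J + 1) <| by
    linarith [hsum.sum_le_tsum (Finset.range (J + 1)) fun j _ => (hℓ j).le]

end Plateau

section GevreyLength

variable {s : ℝ}

def gevreyConst (s : ℝ) : ℝ := 4 * (1 + ∑' m : ℕ, ((m : ℝ) + 1) ^ (-s))

def gevreyLength (s : ℝ) (j : ℕ) : ℝ := ((j : ℝ) + 1) ^ (-s) / gevreyConst s

theorem summable_add_one_rpow_neg (hs : 1 < s) :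
    Summable fun m : ℕ => ((m : ℝ) + 1) ^ (-s) := by
  refine ((summable_nat_add_iff 1).2 (Real.summable_nat_rpow_inv.2 hs)).congr fun m => ?_
  rw [Real.rpow_neg (by positivity)]
  push_cast
  rfl

theorem tsum_add_one_rpow_neg_nonneg (s : ℝ) : 0 ≤ ∑' m : ℕ, ((m : ℝ) + 1) ^ (-s) :=
  tsum_nonneg fun m => by positivity

theorem one_le_gevreyConst (s : ℝ) : 1 ≤ gevreyConst s := by
  unfold gevreyConst
  linarith [tsum_add_one_rpow_neg_nonneg s]

theorem gevreyLength_pos (s : ℝ) (j : ℕ) : 0 < gevreyLength s j :=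
  div_pos (Real.rpow_pos_of_pos (by positivity) _) (zero_lt_one.trans_le (one_le_gevreyConst s))

theorem summable_gevreyLength (hs : 1 < s) : Summable (gevreyLength s) :=
  (summable_add_one_rpow_neg hs).div_const _

theorem tsum_gevreyLength_le (s : ℝ) : ∑' j, gevreyLength s j ≤ 1 / 4 := by
  have hS := tsum_add_one_rpow_neg_nonneg s
  rw [show gevreyLength s = fun j : ℕ => ((j : ℝ) + 1) ^ (-s) / gevreyConst s from rfl,
    tsum_div_const, gevreyConst, div_le_iff₀ (by positivity)]
  linarith

theorem derivBound_gevreyLength (s : ℝ) (k : ℕ) :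
    derivBound (gevreyLength s) k = gevreyConst s ^ k * (k.factorial : ℝ) ^ s := by
  have hinv (j : ℕ) : (gevreyLength s j)⁻¹ = gevreyConst s * ((j : ℝ) + 1) ^ s := by
    rw [gevreyLength, inv_div, Real.rpow_neg (by positivity), div_inv_eq_mul]
  rw [derivBound, Finset.prod_congr rfl fun j _ => hinv j, Finset.prod_mul_distrib,
    Finset.prod_const, Finset.card_range, Real.finsetProd_rpow _ _ fun j _ => by positivity]
  push_cast [← Finset.prod_range_add_one_eq_factorial]
  rfl

theorem exists_gevrey_plateau (hs : 1 < s) :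
    ∃ e ≥ (1 : ℝ), ∃ φ : ℕ → ℝ → ℝ, IsDerivTower φ ∧
      (∀ k x, |φ k x| ≤ e ^ k * (k.factorial : ℝ) ^ s) ∧
      (∀ x, |x| ≤ 1 → φ 0 x = 1) ∧ ∀ x, 2 < |x| → φ 0 x = 0 :=
  ⟨gevreyConst s, one_le_gevreyConst s, plateau (gevreyLength s),
    isDerivTower_plateau (gevreyLength_pos s) (summable_gevreyLength hs),
    fun k x => derivBound_gevreyLength s k ▸
      abs_plateau_le (gevreyLength_pos s) (summable_gevreyLength hs) k x,
    fun _ => plateau_zero_eq_one (gevreyLength_pos s) (summable_gevreyLength hs)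
      (tsum_gevreyLength_le s),
    fun _ => plateau_zero_eq_zero (gevreyLength_pos s) (summable_gevreyLength hs)
      (tsum_gevreyLength_le s)⟩

end GevreyLength

section PartialDerivatives

open scoped ContDiff

variable {d : ℕ} {f g : (Fin d → ℝ) → E}

theorem contDiff_pd (hf : ContDiff ℝ ∞ f) (i : Fin d) : ContDiff ℝ ∞ (pd i f) :=
  (hf.fderiv_right (m := ∞) le_rfl).clm_apply contDiff_const

theorem contDiff_iterate_pd (hf : ContDiff ℝ ∞ f) (i : Fin d) (k : ℕ) :
    ContDiff ℝ ∞ ((pd i)^[k] f) := by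
  induction k with
  | zero => exact hf
  | succ k ih => exact Function.iterate_succ_apply' (pd i) k f ▸ contDiff_pd ih i

theorem pd_sub (hf : Differentiable ℝ f) (hg : Differentiable ℝ g) (i : Fin d) :
    pd i (f - g) = pd i f - pd i g := by
  funext x
  simp [pd, fderiv_sub (hf x) (hg x)]

theorem iterate_pd_sub (hf : ContDiff ℝ ∞ f) (hg : ContDiff ℝ ∞ g) (i : Fin d) (k : ℕ) :
    (pd i)^[k] (f - g) = (pd i)^[k] f - (pd i)^[k] g := by
  induction k with
  | zero => rfl
  | succ k ih =>
    simp only [Function.iterate_succ_apply']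
    rw [ih, pd_sub ((contDiff_iterate_pd hf i k).differentiable (by simp))
      ((contDiff_iterate_pd hg i k).differentiable (by simp))]

theorem md_sub (hf : ContDiff ℝ ∞ f) (hg : ContDiff ℝ ∞ g) (α : Fin d → ℕ) :
    md α (f - g) = md α f - md α g := by
  let D (L : List (Fin d)) (u : (Fin d → ℝ) → E) := L.foldr (fun i v => (pd i)^[α i] v) u
  suffices h : ∀ L, ContDiff ℝ ∞ (D L f) ∧ ContDiff ℝ ∞ (D L g) ∧ D L (f - g) = D L f - D L g
    from (h _).2.2
  intro L
  induction L with
  | nil => exact ⟨hf, hg, rfl⟩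
  | cons i L ih =>
    obtain ⟨hfL, hgL, hsub⟩ := ih
    refine ⟨contDiff_iterate_pd hfL i _, contDiff_iterate_pd hgL i _, ?_⟩
    simp only [D, List.foldr_cons] at hsub ⊢
    rw [hsub, iterate_pd_sub hfL hgL]

end PartialDerivatives

section Tensor

variable {d : ℕ} {ψ : ℕ → ℝ → ℝ}

def tensor (ψ : ℕ → ℝ → ℝ) (β : Fin d → ℕ) (ξ : Fin d → ℝ) : ℝ := ∏ i, ψ (β i) (ξ i)

open scoped ContDiff in
theorem IsDerivTower.contDiff_tensor (h : IsDerivTower ψ) (β : Fin d → ℕ) :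
    ContDiff ℝ ∞ (tensor ψ β) :=
  contDiff_prod fun i _ => (h.contDiff (β i)).comp (contDiff_apply ℝ ℝ i)

theorem IsDerivTower.pd_tensor (h : IsDerivTower ψ) (β : Fin d → ℕ) (i : Fin d) :
    pd i (tensor ψ β) = tensor ψ (Function.update β i (β i + 1)) := by
  funext ξ
  have hfactor (j : Fin d) : HasFDerivAt (fun ξ : Fin d → ℝ => ψ (β j) (ξ j))
      (ψ (β j + 1) (ξ j) • ContinuousLinearMap.proj (R := ℝ) (φ := fun _ : Fin d => ℝ) j) ξ :=
    (h (β j) (ξ j)).comp_hasFDerivAt ξ (hasFDerivAt_apply j ξ)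
  have hF := HasFDerivAt.finsetProd (u := Finset.univ) fun j _ => hfactor j
  rw [pd, show tensor ψ β = fun ξ => ∏ j, ψ (β j) (ξ j) from rfl, hF.fderiv, tensor,
    ← Finset.mul_prod_erase _ _ (Finset.mem_univ i)]
  simp only [FunLike.coe_sum, Finset.sum_apply, smul_apply,
    ContinuousLinearMap.proj_apply, Pi.single_apply, smul_eq_mul, mul_ite, mul_one, mul_zero,
    Finset.sum_ite_eq', Finset.mem_univ, if_true, Function.update_self]
  rw [mul_comm]
  congr 1
  exact Finset.prod_congr rfl fun j hj => by rw [Function.update_of_ne (Finset.ne_of_mem_erase hj)]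

theorem IsDerivTower.iterate_pd_tensor (h : IsDerivTower ψ) (β : Fin d → ℕ) (i : Fin d)
    (k : ℕ) : (pd i)^[k] (tensor ψ β) = tensor ψ (Function.update β i (β i + k)) := by
  induction k with
  | zero => simp
  | succ k ih =>
    rw [Function.iterate_succ_apply', ih, h.pd_tensor, Function.update_idem,
      Function.update_self, add_assoc]

theorem IsDerivTower.md_tensor (h : IsDerivTower ψ) (α β : Fin d → ℕ) :
    md α (tensor ψ β) = tensor ψ (β + α) := by
  have hfold (L : List (Fin d)) : L.foldr (fun i g => (pd i)^[α i] g) (tensor ψ β) =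
      tensor ψ fun j => β j + L.count j * α j := by
    induction L with
    | nil => simp
    | cons i L ih =>
      rw [List.foldr_cons, ih, h.iterate_pd_tensor]
      congr 1
      funext j
      rcases eq_or_ne j i with rfl | hji
      · rw [Function.update_self, List.count_cons_self]
        ring
      · rw [Function.update_of_ne hji, List.count_cons_of_ne hji.symm]
  rw [md, hfold]
  congr 1
  funext j
  rw [List.count_eq_one_of_mem (List.nodup_finRange d) (List.mem_finRange j), one_mul]
  rfl

theorem abs_tensor_le {e s : ℝ} (hψ : ∀ k x, |ψ k x| ≤ e ^ k * (k.factorial : ℝ) ^ s)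
    (α : Fin d → ℕ) (ξ : Fin d → ℝ) :
    |tensor ψ α ξ| ≤ e ^ msize α * (mfact α : ℝ) ^ s := by
  calc |tensor ψ α ξ| = ∏ i, |ψ (α i) (ξ i)| := Finset.abs_prod _ _
    _ ≤ ∏ i, (e ^ α i * ((α i).factorial : ℝ) ^ s) :=
        Finset.prod_le_prod (fun _ _ => abs_nonneg _) fun i _ => hψ _ _
    _ = e ^ msize α * (mfact α : ℝ) ^ s := by
        rw [Finset.prod_mul_distrib, Finset.prod_pow_eq_pow_sum,
          Real.finsetProd_rpow _ _ fun _ _ => by positivity, msize, mfact]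
        push_cast
        rfl

theorem IsDerivTower.norm_md_tensor_zero_le {e s : ℝ} (h : IsDerivTower ψ)
    (hψ : ∀ k x, |ψ k x| ≤ e ^ k * (k.factorial : ℝ) ^ s) (α : Fin d → ℕ) (ξ : Fin d → ℝ) :
    ‖md α (tensor ψ 0) ξ‖ ≤ e ^ msize α * (mfact α : ℝ) ^ s := by
  rw [h.md_tensor, zero_add, Real.norm_eq_abs]
  exact abs_tensor_le hψ α ξ

theorem tensor_zero_eq_one {r : ℝ} (h1 : ∀ x, |x| ≤ r → ψ 0 x = 1) {ξ : Fin d → ℝ}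
    (hξ : ‖ξ‖ ≤ r) : tensor ψ 0 ξ = 1 :=
  Finset.prod_eq_one fun i _ => h1 _ <| (Real.norm_eq_abs (ξ i) ▸ norm_le_pi_norm ξ i).trans hξ

theorem tensor_zero_eq_zero {r : ℝ} (hr : 0 ≤ r) (h0 : ∀ x, r < |x| → ψ 0 x = 0)
    {ξ : Fin d → ℝ} (hξ : r < ‖ξ‖) : tensor ψ 0 ξ = 0 := by
  obtain ⟨i, hi⟩ : ∃ i, r < |ξ i| := by
    by_contra! hsmall
    exact hξ.not_ge <| (pi_norm_le_iff_of_nonneg hr).2 fun i => (Real.norm_eq_abs _).trans_le (hsmall i)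
  exact Finset.prod_eq_zero (Finset.mem_univ i) (h0 _ hi)

theorem tensor_rescale_zero (c : ℝ) (ξ : Fin d → ℝ) :
    tensor (fun k x => c ^ k * ψ k (c * x)) 0 ξ = tensor ψ 0 (c • ξ) := by
  simp [tensor]

end Tensor

section Dyadic

variable {χ₀ χ : E → ℝ}

theorem tsupport_subset_annulus (h1 : ∀ ξ, ‖ξ‖ ≤ 1 → χ₀ ξ = 1) (h0 : ∀ ξ, 2 < ‖ξ‖ → χ₀ ξ = 0)
    (hχ : ∀ ξ, χ ξ = χ₀ ξ - χ₀ ((2 : ℝ) • ξ)) :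
    tsupport χ ⊆ {ξ | 1 / 2 ≤ ‖ξ‖ ∧ ‖ξ‖ ≤ 2} := by
  refine closure_minimal (fun ξ hξ => ?_)
    ((isClosed_le continuous_const continuous_norm).inter (isClosed_le continuous_norm continuous_const))
  have h2 : ‖(2 : ℝ) • ξ‖ = 2 * ‖ξ‖ := by rw [norm_smul, Real.norm_two]
  by_contra hout
  apply hξ
  rw [hχ]
  rcases not_and_or.1 hout with h | h <;> push Not at h
  · rw [h1 ξ (by linarith), h1 _ (by linarith), sub_self]
  · rw [h0 ξ h, h0 _ (by linarith), sub_self]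

theorem dyadic_sum_eq_one (h1 : ∀ ξ, ‖ξ‖ ≤ 1 → χ₀ ξ = 1)
    (hχ : ∀ ξ, χ ξ = χ₀ ξ - χ₀ ((2 : ℝ) • ξ)) (ξ : E) :
    {ν : ℕ | χ (((2 : ℝ) ^ (ν + 1))⁻¹ • ξ) ≠ 0}.Finite ∧
      χ₀ ξ + ∑' ν : ℕ, χ (((2 : ℝ) ^ (ν + 1))⁻¹ • ξ) = 1 := by
  obtain ⟨N, hN⟩ := pow_unbounded_of_one_lt ‖ξ‖ one_lt_two
  set G : ℕ → ℝ := fun ν => χ₀ (((2 : ℝ) ^ ν)⁻¹ • ξ)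
  have hterm (ν : ℕ) : χ (((2 : ℝ) ^ (ν + 1))⁻¹ • ξ) = G (ν + 1) - G ν := by
    have hhalf : (2 : ℝ) * ((2 : ℝ) ^ (ν + 1))⁻¹ = ((2 : ℝ) ^ ν)⁻¹ := by
      rw [pow_succ]
      field_simp
    rw [hχ, smul_smul, hhalf]
  have hG (ν : ℕ) (hν : N ≤ ν) : G ν = 1 := by
    refine h1 _ ?_
    rw [norm_smul, norm_inv, norm_pow, Real.norm_two, inv_mul_le_iff₀ (by positivity), mul_one]
    exact hN.le.trans (pow_le_pow_right₀ one_le_two hν)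
  have hzero (ν : ℕ) (hν : ν ∉ Finset.range N) : χ (((2 : ℝ) ^ (ν + 1))⁻¹ • ξ) = 0 := by
    rw [Finset.mem_range, not_lt] at hν
    rw [hterm, hG ν hν, hG (ν + 1) (by omega), sub_self]
  refine ⟨(Finset.range N).finite_toSet.subset fun ν hν => ?_, ?_⟩
  · by_contra hνN
    exact hν (hzero ν hνN)
  · rw [tsum_eq_sum hzero, Finset.sum_congr rfl fun ν _ => hterm ν, Finset.sum_range_sub,
      hG N le_rfl]
    simp [G]

end Dyadic

theorem pow_add_two_mul_pow_le {e : ℝ} (he : 1 ≤ e) (k : ℕ) :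
    e ^ k + (2 * e) ^ k ≤ (2 * e) ^ (1 + k) := by
  have hek : e ^ k ≤ (2 * e) ^ k := pow_le_pow_left₀ (by linarith) (by linarith) k
  rw [pow_add, pow_one]
  nlinarith [pow_nonneg (by linarith : (0 : ℝ) ≤ 2 * e) k]

end GevreyPartition

open GevreyPartition

theorem gevrey_dyadic_partition_of_unity_general
    (s : ℝ) (hs : 1 < s) (n : ℕ) :
    ∃ C > 0, ∃ χ₀ χ : (Fin n → ℝ) → ℝ, ∃ r₁ r₂ : ℝ,
      0 < r₁ ∧ r₁ < r₂ ∧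
      ContDiff ℝ (⊤ : ℕ∞) χ₀ ∧ ContDiff ℝ (⊤ : ℕ∞) χ ∧
      HasCompactSupport χ₀ ∧ HasCompactSupport χ ∧
      tsupport χ ⊆ {ξ : Fin n → ℝ | r₁ ≤ ‖ξ‖ ∧ ‖ξ‖ ≤ r₂} ∧
      (∀ (α : Fin n → ℕ) (ξ : Fin n → ℝ),
        ‖md α χ₀ ξ‖ ≤ C ^ (1 + msize α) * ((mfact α : ℕ) : ℝ) ^ s) ∧
      (∀ (α : Fin n → ℕ) (ξ : Fin n → ℝ),
        ‖md α χ ξ‖ ≤ C ^ (1 + msize α) * ((mfact α : ℕ) : ℝ) ^ s) ∧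
      (∀ ξ : Fin n → ℝ,
        {ν : ℕ | χ ((((2:ℝ) ^ (ν + 1))⁻¹) • ξ) ≠ 0}.Finite ∧
        χ₀ ξ + ∑' ν : ℕ, χ ((((2:ℝ) ^ (ν + 1))⁻¹) • ξ) = 1) := by
  obtain ⟨e, he, φ, hφ, hbound, hone, hzero⟩ := exists_gevrey_plateau hs
  set φ₂ : ℕ → ℝ → ℝ := fun k x => 2 ^ k * φ k (2 * x)
  have h1 (ξ : Fin n → ℝ) : ‖ξ‖ ≤ 1 → tensor φ 0 ξ = 1 := tensor_zero_eq_one hone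
  have h0 (ξ : Fin n → ℝ) : 2 < ‖ξ‖ → tensor φ 0 ξ = 0 := tensor_zero_eq_zero zero_le_two hzero
  have hχ (ξ : Fin n → ℝ) : (tensor φ 0 - tensor φ₂ 0 : (Fin n → ℝ) → ℝ) ξ =
      tensor φ 0 ξ - tensor φ 0 ((2 : ℝ) • ξ) := by
    rw [Pi.sub_apply, tensor_rescale_zero]
  have hannulus := tsupport_subset_annulus h1 h0 hχ
  refine ⟨2 * e, by positivity, tensor φ 0, tensor φ 0 - tensor φ₂ 0, 1 / 2, 2, by norm_num,
    by norm_num, hφ.contDiff_tensor 0, (hφ.contDiff_tensor 0).sub ((hφ.rescale 2).contDiff_tensor 0),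
    HasCompactSupport.intro (isCompact_closedBall 0 2) fun ξ hξ => h0 ξ (by simpa using hξ),
    (isCompact_closedBall 0 2).of_isClosed_subset (isClosed_tsupport _)
      (hannulus.trans fun ξ hξ => mem_closedBall_zero_iff.2 hξ.2),
    hannulus, fun α ξ => ?_, fun α ξ => ?_, dyadic_sum_eq_one h1 hχ⟩
  · calc ‖md α (tensor φ 0) ξ‖ ≤ e ^ msize α * (mfact α : ℝ) ^ s :=
          hφ.norm_md_tensor_zero_le hbound α ξ
      _ ≤ (2 * e) ^ (1 + msize α) * (mfact α : ℝ) ^ s := by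
          gcongr
          exact (le_add_of_nonneg_right (by positivity)).trans (pow_add_two_mul_pow_le he _)
  · rw [md_sub (hφ.contDiff_tensor 0) ((hφ.rescale 2).contDiff_tensor 0), Pi.sub_apply]
    calc _ ≤ e ^ msize α * (mfact α : ℝ) ^ s + (2 * e) ^ msize α * (mfact α : ℝ) ^ s :=
          (norm_sub_le _ _).trans (add_le_add (hφ.norm_md_tensor_zero_le hbound α ξ)
            ((hφ.rescale 2).norm_md_tensor_zero_le (abs_rescale_le zero_le_two hbound) α ξ))
      _ ≤ (2 * e) ^ (1 + msize α) * (mfact α : ℝ) ^ s := by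
          rw [← add_mul]
          gcongr
          exact pow_add_two_mul_pow_le he _

/-- **Gevrey dyadic partition of unity** (equations (2.21) and (A.2.7)): for `s > 1` there
exist Gevrey-`s` compactly supported functions `χ₀` and `χ`, with `supp χ` in a compact annulus
away from the origin, such that `χ₀(ξ) + Σ_{ν≥1} χ(2^{−ν}ξ) = 1` with a locally finite sum. -/
theorem gevrey_dyadic_partition_of_unity
    (s : ℝ) (hs : 1 < s) (n : ℕ) (hn : 1 ≤ n) :
    ∃ C > 0, ∃ χ₀ χ : (Fin n → ℝ) → ℝ, ∃ r₁ r₂ : ℝ,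
      0 < r₁ ∧ r₁ < r₂ ∧
      ContDiff ℝ (⊤ : ℕ∞) χ₀ ∧ ContDiff ℝ (⊤ : ℕ∞) χ ∧
      HasCompactSupport χ₀ ∧ HasCompactSupport χ ∧
      tsupport χ ⊆ {ξ : Fin n → ℝ | r₁ ≤ ‖ξ‖ ∧ ‖ξ‖ ≤ r₂} ∧
      (∀ (α : Fin n → ℕ) (ξ : Fin n → ℝ),
        ‖md α χ₀ ξ‖ ≤ C ^ (1 + msize α) * ((mfact α : ℕ) : ℝ) ^ s) ∧
      (∀ (α : Fin n → ℕ) (ξ : Fin n → ℝ),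
        ‖md α χ ξ‖ ≤ C ^ (1 + msize α) * ((mfact α : ℕ) : ℝ) ^ s) ∧
      (∀ ξ : Fin n → ℝ,
        {ν : ℕ | χ ((((2:ℝ) ^ (ν + 1))⁻¹) • ξ) ≠ 0}.Finite ∧
        χ₀ ξ + ∑' ν : ℕ, χ ((((2:ℝ) ^ (ν + 1))⁻¹) • ξ) = 1) :=
  gevrey_dyadic_partition_of_unity_general s hs n
end
end
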